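/- arXiv:1411.0243 — 6 statements merged into one kernel-verified Lean document; each statement's English description precedes it below -/
import Mathlib

section
/- Let Ξ be an n×n random matrix whose entries are iid uniform on {+1, −1}. Then P(det(Ξ) = 0) = O(n^{−1/2}). -/
/-!
If `det = 0`, some row `k` lies in the span `V` of the rows above it, and conditioning on the other
rows leaves row `k` uniform. Odlyzko's bound `P(ε ∈ V) ≤ 2 ^ (dim V - n)` disposes of `k ≤ n / 2`.
For larger `k`, either some column of the first `k` rows lies in the span of at most `t = n / 64`
other columns, which a union bound over the `≤ n · 2 ^ O(n / 64)` choices and Odlyzko's bound for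
that column make exponentially unlikely, or every linear relation that holds on `V` between a
coordinate and the others involves more than `t` of them. In the second case the
Erdős–Littlewood–Offord bound gains a factor `O(t ^ (-1/2))` over Odlyzko's count, and summing
`2 ^ (k - n)` over `k` gives `O(n ^ (-1/2))`.
-/

open scoped Classical

noncomputable section

/-- The real `±1` matrix associated to a Boolean matrix (`true ↦ +1`, `false ↦ -1`). -/
def sgn2r {n : ℕ} (A : Matrix (Fin n) (Fin n) Bool) : Matrix (Fin n) (Fin n) ℝ :=
  Matrix.of fun i j => if A i j then (1 : ℝ) else -1

/-- Probability of the event `p` for a uniform random element of the finite set `s`. -/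
def cprob {α : Type*} [Fintype α] (s : Finset α) (p : α → Prop) : ℝ :=
  ((s.filter p).card : ℝ) / (s.card : ℝ)

open Finset Module

section UniformProbability

variable {α : Type*} [Fintype α]

theorem cprob_le_one (s : Finset α) (p : α → Prop) : cprob s p ≤ 1 := by
  unfold cprob
  exact div_le_one_of_le₀ (by exact_mod_cast card_filter_le _ _) (by positivity)

theorem cprob_mono {s : Finset α} {p q : α → Prop} (h : ∀ x ∈ s, p x → q x) :
    cprob s p ≤ cprob s q := by
  unfold cprob
  gcongr ?_ / _
  exact_mod_cast card_le_card (monotone_filter_right s fun x hx => h x hx)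

theorem cprob_or_le (s : Finset α) (p q : α → Prop) :
    cprob s (fun x => p x ∨ q x) ≤ cprob s p + cprob s q := by
  unfold cprob
  rw [← add_div]
  gcongr ?_ / _
  refine le_trans (Nat.cast_le.mpr (card_le_card fun x hx => ?_))
    (by exact_mod_cast card_union_le _ _)
  · simp only [mem_filter] at hx
    obtain ⟨hxs, hpq⟩ := hx
    rcases hpq with hp | hq
    · exact mem_union_left _ (mem_filter.mpr ⟨hxs, hp⟩)
    · exact mem_union_right _ (mem_filter.mpr ⟨hxs, hq⟩)

theorem cprob_exists_le_sum {κ : Type*} (s : Finset α) (K : Finset κ) (p : κ → α → Prop) :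
    cprob s (fun x => ∃ k ∈ K, p k x) ≤ ∑ k ∈ K, cprob s (p k) := by
  unfold cprob
  rw [← sum_div]
  gcongr ?_ / _
  refine le_trans (Nat.cast_le.mpr (card_le_card fun x hx => ?_))
    (le_trans (Nat.cast_le.mpr card_biUnion_le) (by push_cast; rfl))
  simp only [mem_filter] at hx
  obtain ⟨hxs, k, hk, hpk⟩ := hx
  exact mem_biUnion.mpr ⟨k, hk, mem_filter.mpr ⟨hxs, hpk⟩⟩

theorem card_filter_le_of_cprob_univ_le {p : α → Prop} {M : ℝ} (h : cprob univ p ≤ M) :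
    ((univ.filter p).card : ℝ) ≤ M * Fintype.card α := by
  rcases (Fintype.card α).eq_zero_or_pos with h0 | h0
  · have : (univ.filter p).card = 0 :=
      Nat.eq_zero_of_le_zero (h0 ▸ (card_filter_le _ _).trans_eq card_univ)
    simp [this, h0]
  · rwa [cprob, card_univ, div_le_iff₀ (by exact_mod_cast h0)] at h

theorem cprob_univ_le_of_equiv_prod {Ω β : Type*} [Fintype Ω] [Fintype β] (e : Ω ≃ α × β)
    {p : Ω → Prop} {M : ℝ} (hM : 0 ≤ M)
    (h : ∀ b, cprob univ (fun a => p (e.symm (a, b))) ≤ M) : cprob univ p ≤ M := by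
  have hcard : ((univ.filter p).card : ℝ) =
      ∑ b, ((univ.filter fun a => p (e.symm (a, b))).card : ℝ) := by
    simp only [card_filter]
    push_cast
    rw [← Fintype.sum_prod_type_right (f := fun x : α × β => if p (e.symm x) then (1 : ℝ) else 0),
      e.symm.sum_comp (fun ω => if p ω then (1 : ℝ) else 0)]
  unfold cprob
  rw [card_univ, Fintype.card_congr e, Fintype.card_prod, hcard]
  apply div_le_of_le_mul₀ (by positivity) hM
  calc ∑ b, ((univ.filter fun a => p (e.symm (a, b))).card : ℝ)
      ≤ ∑ _b : β, M * Fintype.card α :=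
        sum_le_sum fun b _ => card_filter_le_of_cprob_univ_le (h b)
    _ = M * ((Fintype.card α * Fintype.card β : ℕ) : ℝ) := by
      rw [sum_const, card_univ, nsmul_eq_mul]; push_cast; ring

end UniformProbability

def signVec {ι : Type*} (w : ι → Bool) : ι → ℝ := fun i => if w i then 1 else -1

theorem signVec_injective {ι : Type*} : Function.Injective (signVec (ι := ι)) := by
  intro w w' h
  funext i
  have := congrFun h i
  cases hw : w i <;> cases hw' : w' i <;> simp [signVec, hw, hw'] at this ⊢ <;> norm_num at this

theorem signVec_apply_eq_or {ι : Type*} (w : ι → Bool) (i : ι) :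
    signVec w i = 1 ∨ signVec w i = -1 := by
  unfold signVec; split <;> simp

theorem card_filter_eq_le_choose_of_strictMono {ι : Type*} [Fintype ι] {F : Finset ι → ℝ}
    (hF : StrictMono F) (r : ℝ) :
    (univ.filter fun A => F A = r).card ≤ (Fintype.card ι).choose (Fintype.card ι / 2) :=
  IsAntichain.sperner fun A hA B hB hne hAB => by
    simp only [coe_filter, mem_univ, true_and, Set.mem_ofPred_eq] at hA hB
    exact (hF (lt_of_le_of_ne hAB hne)).ne (hA.trans hB.symm)

section SignVectors

variable {ι : Type*} [Fintype ι] [DecidableEq ι]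

theorem cprob_univ_eq_card_div_two_pow (p : (ι → Bool) → Prop) :
    cprob univ p = (univ.filter p).card / 2 ^ Fintype.card ι := by
  simp [cprob]

/-- Erdős' form of the Littlewood–Offord bound: flipping the signs of the negative `c i` makes
`w ↦ ∑ i, c i * signVec w i` strictly monotone in the set of coordinates where `w` agrees with the
sign of `c`, so a level set is an antichain. -/
theorem card_sum_mul_signVec_eq_le_choose {c : ι → ℝ} (hc : ∀ i, c i ≠ 0) (r : ℝ) :
    (univ.filter fun w => ∑ i, c i * signVec w i = r).card
      ≤ (Fintype.card ι).choose (Fintype.card ι / 2) := by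
  let φ : (ι → Bool) → Finset ι := fun w => univ.filter fun i => w i = decide (0 < c i)
  let F : Finset ι → ℝ := fun A => ∑ i, if i ∈ A then |c i| else -|c i|
  have hF : StrictMono F := fun A B hAB => by
    obtain ⟨i, hiB, hiA⟩ := exists_of_ssubset hAB
    refine sum_lt_sum (fun j _ => ?_) ⟨i, mem_univ _, by simp [hiA, hiB, hc i]⟩
    by_cases hjA : j ∈ A
    · simp [hjA, hAB.subset hjA]
    · by_cases hjB : j ∈ B <;> simp [hjA, hjB]
  have hsum : ∀ w, ∑ i, c i * signVec w i = F (φ w) := fun w => by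
    refine sum_congr rfl fun i _ => ?_
    rcases (hc i).lt_or_gt with h | h <;> cases hw : w i <;>
      simp [signVec, φ, hw, h, h.not_gt, abs_of_neg, abs_of_pos]
  refine le_trans (card_le_card_of_injOn φ (fun w hw => ?_) fun w _ w' _ h => ?_)
    (card_filter_eq_le_choose_of_strictMono hF r)
  · simp only [coe_filter, mem_univ, true_and, Set.mem_ofPred_eq] at hw ⊢
    rwa [← hsum]
  · funext i
    have := congrArg (i ∈ ·) h
    simp only [φ, mem_filter, mem_univ, true_and, eq_iff_iff] at this
    generalize decide (0 < c i) = d at this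
    revert this
    cases w i <;> cases w' i <;> cases d <;> simp

/-- **Littlewood–Offord**: conditioning on the coordinates where `c` vanishes reduces to the case
where all `c i` are nonzero. -/
theorem cprob_sum_mul_signVec_eq_le (c : ι → ℝ) (r : ℝ) :
    cprob univ (fun w : ι → Bool => ∑ i, c i * signVec w i = r)
      ≤ (Fintype.card {i // c i ≠ 0}).choose (Fintype.card {i // c i ≠ 0} / 2)
        / 2 ^ Fintype.card {i // c i ≠ 0} := by
  refine cprob_univ_le_of_equiv_prod (Equiv.piEquivPiSubtypeProd (c · ≠ 0) fun _ => Bool)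
    (by positivity) fun z => ?_
  have hsum : ∀ u : {i // c i ≠ 0} → Bool,
      ∑ i, c i * signVec ((Equiv.piEquivPiSubtypeProd (c · ≠ 0) fun _ => Bool).symm (u, z)) i
        = ∑ i : {i // c i ≠ 0}, c i * signVec u i := fun u => by
    rw [← Fintype.sum_subtype_add_sum_subtype (c · ≠ 0)]
    refine (add_eq_left.mpr (Fintype.sum_eq_zero _ fun i => ?_)).trans
      (Fintype.sum_congr _ _ fun i => ?_)
    · simp [not_not.mp i.2]
    · simp [signVec, i.2]
  simp only [hsum]
  rw [cprob_univ_eq_card_div_two_pow]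
  gcongr
  exact_mod_cast card_sum_mul_signVec_eq_le_choose (c := fun i : {i // c i ≠ 0} => c i)
    (fun i => i.2) r

end SignVectors

theorem Nat.succ_mul_centralBinom_sq_le (k : ℕ) : (k + 1) * k.centralBinom ^ 2 ≤ 16 ^ k := by
  induction k with
  | zero => simp
  | succ k ih =>
    have hpoly : (k + 2) * (2 * (2 * k + 1)) ^ 2 ≤ 16 * (k + 1) ^ 3 := by ring_nf; omega
    refine Nat.le_of_mul_le_mul_left (c := (k + 1) ^ 2) ?_ (pow_pos k.succ_pos 2)
    calc (k + 1) ^ 2 * ((k + 1 + 1) * (k + 1).centralBinom ^ 2)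
        = (k + 2) * ((k + 1) * (k + 1).centralBinom) ^ 2 := by ring
      _ = (k + 2) * (2 * (2 * k + 1)) ^ 2 * k.centralBinom ^ 2 := by
        rw [Nat.succ_mul_centralBinom_succ]; ring
      _ ≤ 16 * (k + 1) ^ 3 * k.centralBinom ^ 2 := by gcongr
      _ = 16 * (k + 1) ^ 2 * ((k + 1) * k.centralBinom ^ 2) := by ring
      _ ≤ 16 * (k + 1) ^ 2 * 16 ^ k := by gcongr
      _ = (k + 1) ^ 2 * 16 ^ (k + 1) := by ring

theorem Nat.mul_choose_half_sq_le (m : ℕ) : m * m.choose (m / 2) ^ 2 ≤ 2 * 4 ^ m := by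
  obtain ⟨k, rfl | rfl⟩ := m.even_or_odd'
  · have h := Nat.succ_mul_centralBinom_sq_le k
    rw [Nat.centralBinom_eq_two_mul_choose] at h
    rw [show 2 * k / 2 = k by omega, pow_mul, show (4 : ℕ) ^ 2 = 16 by rfl]
    nlinarith
  · have h := Nat.succ_mul_centralBinom_sq_le (k + 1)
    have hc : (k + 1).centralBinom = 2 * (2 * k + 1).choose k := by
      rw [Nat.centralBinom_eq_two_mul_choose, show 2 * (k + 1) = 2 * k + 1 + 1 by ring,
        Nat.choose_succ_succ, Nat.choose_symm_half]; ring
    rw [hc] at h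
    rw [show (2 * k + 1) / 2 = k by omega,
      show (4 : ℕ) ^ (2 * k + 1) = 4 * 16 ^ k by rw [pow_succ, pow_mul]; ring]
    rw [pow_succ 16 k] at h
    nlinarith

theorem Nat.choose_half_div_two_pow_le {m : ℕ} (hm : 0 < m) :
    (m.choose (m / 2) : ℝ) / 2 ^ m ≤ √(2 / m) := by
  have h : (m : ℝ) * m.choose (m / 2) ^ 2 ≤ 2 * 4 ^ m := by
    exact_mod_cast Nat.mul_choose_half_sq_le m
  apply Real.le_sqrt_of_sq_le
  rw [div_pow, ← pow_mul, mul_comm m 2, pow_mul, show (2 : ℝ) ^ 2 = 4 by norm_num,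
    div_le_div_iff₀ (by positivity) (by exact_mod_cast hm)]
  linarith

theorem exists_mem_span_image_Iio_of_not_linearIndependent {K ι V : Type*} [Field K] [Fintype ι]
    [LinearOrder ι] [AddCommGroup V] [Module K V] {v : ι → V} (h : ¬ LinearIndependent K v) :
    ∃ k, v k ∈ Submodule.span K (v '' Set.Iio k) := by
  rw [Fintype.linearIndependent_iff] at h
  push Not at h
  obtain ⟨g, hsum, i₀, hi₀⟩ := h
  obtain ⟨k, hk, hmax⟩ := (univ.filter (g · ≠ 0)).exists_max_image id ⟨i₀, by simpa using hi₀⟩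
  simp only [mem_filter, mem_univ, true_and, id] at hk hmax
  refine ⟨k, (Submodule.smul_mem_iff _ hk).mp ?_⟩
  have hsplit : ∑ i, g i • v i = ∑ i ∈ univ.filter (· < k), g i • v i + g k • v k := by
    rw [← sum_filter_add_sum_filter_not univ (· < k)]
    congr 1
    refine sum_eq_single_of_mem k (by simp) fun i hi hik => ?_
    have : g i = 0 := by
      by_contra hgi
      exact hik (le_antisymm (hmax i hgi) (not_lt.mp (mem_filter.mp hi).2))
    simp [this]
  rw [hsum, eq_comm] at hsplit
  rw [eq_neg_of_add_eq_zero_right hsplit]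
  refine Submodule.neg_mem _ (Submodule.sum_mem _ fun i hi => Submodule.smul_mem _ _ ?_)
  exact Submodule.subset_span ⟨i, (mem_filter.mp hi).2, rfl⟩

namespace Submodule

variable {K ι : Type*} [Field K]

def CoordDeterminedBy (V : Submodule K (ι → K)) (j : ι) (T : Finset ι) : Prop :=
  ∃ c : ι → K, ∀ v ∈ V, v j = ∑ i ∈ T, c i * v i

/-- Some coordinate is determined on `V` by at most `t` other coordinates; for the row space of a
matrix this says that some column lies in the span of at most `t` other columns. -/
def HasShortCoordRelation (V : Submodule K (ι → K)) (t : ℕ) : Prop :=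
  ∃ j T, j ∉ T ∧ #T ≤ t ∧ V.CoordDeterminedBy j T

theorem eq_of_forall_coordDeterminedBy {V : Submodule K (ι → K)} {S : Finset ι}
    (hS : ∀ j, V.CoordDeterminedBy j S) {v v' : ι → K} (hv : v ∈ V) (hv' : v' ∈ V)
    (h : ∀ i ∈ S, v i = v' i) : v = v' := by
  funext j
  obtain ⟨c, hc⟩ := hS j
  rw [hc v hv, hc v' hv']
  exact sum_congr rfl fun i hi => by rw [h i hi]

/-- The coordinate functionals restricted to `V` span the dual of `V`, so some `finrank V` of them
already determine all the others. -/
theorem exists_forall_coordDeterminedBy [Fintype ι] (V : Submodule K (ι → K)) :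
    ∃ S : Finset ι, #S ≤ finrank K V ∧ ∀ j, V.CoordDeterminedBy j S := by
  let f : ι → Dual K V := fun i => (LinearMap.proj i).comp V.subtype
  obtain ⟨b, -, -, hspan, hli⟩ :=
    exists_linearIndepOn_extension (linearIndepOn_empty K f) (Set.empty_subset Set.univ)
  refine ⟨b.toFinset, ?_, fun j => ?_⟩
  · rw [← Subspace.dual_finrank_eq, Set.toFinset_card]
    exact hli.linearIndependent.fintype_card_le_finrank
  · have hj : f j ∈ span K (f '' b.toFinset) := by
      rw [Set.coe_toFinset]; exact hspan ⟨j, Set.mem_univ _, rfl⟩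
    obtain ⟨c, hc⟩ := (mem_span_image_finset_iff_exists_fun' K).mp hj
    refine ⟨c, fun v hv => ?_⟩
    have := congrArg (fun φ : Dual K V => φ ⟨v, hv⟩) hc
    simpa [f, eq_comm] using this

end Submodule

section SignVectorsInSubspaces

variable {ι : Type*} [Fintype ι] [DecidableEq ι]

theorem cprob_signVec_mem_le_of_restrict {V : Submodule ℝ (ι → ℝ)} {S : Finset ι}
    (hS : ∀ j, V.CoordDeterminedBy j S) (q : (S → Bool) → Prop)
    (hq : ∀ w, signVec w ∈ V → q fun i => w i) :
    cprob univ (fun w => signVec w ∈ V) ≤ cprob univ q * 2 ^ #S / 2 ^ Fintype.card ι := by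
  rw [cprob_univ_eq_card_div_two_pow, cprob_univ_eq_card_div_two_pow, Fintype.card_coe,
    div_mul_cancel₀ _ (by positivity)]
  gcongr
  refine card_le_card_of_injOn (fun w i => w i) (fun w hw => ?_) fun w hw w' hw' h => ?_
  · simp only [coe_filter, mem_univ, true_and, Set.mem_ofPred_eq] at hw ⊢
    exact hq w hw
  · simp only [coe_filter, mem_univ, true_and, Set.mem_ofPred_eq] at hw hw'
    refine signVec_injective (Submodule.eq_of_forall_coordDeterminedBy hS hw hw' fun i hi => ?_)
    simp only [signVec, congrFun h ⟨i, hi⟩]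

/-- **Odlyzko's bound.** -/
theorem cprob_signVec_mem_le (V : Submodule ℝ (ι → ℝ)) :
    cprob univ (fun w => signVec w ∈ V) ≤ 2 ^ finrank ℝ V / 2 ^ Fintype.card ι := by
  obtain ⟨S, hScard, hS⟩ := V.exists_forall_coordDeterminedBy
  calc cprob univ (fun w => signVec w ∈ V)
      ≤ cprob univ (fun _ => True) * 2 ^ #S / 2 ^ Fintype.card ι :=
        cprob_signVec_mem_le_of_restrict hS _ fun _ _ => trivial
    _ ≤ 1 * 2 ^ finrank ℝ V / 2 ^ Fintype.card ι := by
        gcongr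
        · exact cprob_le_one _ _
        · norm_num
    _ = _ := by rw [one_mul]

/-- If no coordinate is determined on `V` by `t` others, then a coordinate `j` outside a
determining set `S` is a combination of more than `t` coordinates of `S`, so on top of Odlyzko's
count of the possible restrictions to `S`, the Littlewood–Offord bound applies to the constraint
`∑ c i * signVec w i = signVec w j = ±1`. -/
theorem cprob_signVec_mem_le_of_not_hasShortCoordRelation {V : Submodule ℝ (ι → ℝ)} {t : ℕ}
    (hV : ¬ V.HasShortCoordRelation t) (hdim : finrank ℝ V < Fintype.card ι) :
    cprob univ (fun w => signVec w ∈ V)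
      ≤ 2 * √(2 / (t + 1)) * 2 ^ finrank ℝ V / 2 ^ Fintype.card ι := by
  obtain ⟨S, hScard, hS⟩ := V.exists_forall_coordDeterminedBy
  obtain ⟨j, -, hj⟩ := exists_mem_notMem_of_card_lt_card (s := S) (t := univ)
    (by rw [card_univ]; omega)
  obtain ⟨c, hc⟩ := hS j
  have hm : t + 1 ≤ Fintype.card {i : S // c i ≠ 0} := by
    by_contra! hlt
    refine hV ⟨j, S.filter (c · ≠ 0), fun h => hj (mem_filter.mp h).1, ?_, c, fun v hv => ?_⟩
    · rw [Fintype.card_subtype, card_filter,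
        sum_coe_sort S fun i => if c i ≠ 0 then 1 else 0, ← card_filter] at hlt
      omega
    · rw [hc v hv, sum_filter_of_ne fun i _ h => left_ne_zero_of_mul h]
  have hLO : ∀ r,
      cprob univ (fun u : S → Bool => ∑ i : S, c i * signVec u i = r) ≤ √(2 / (t + 1)) :=
    fun r => (cprob_sum_mul_signVec_eq_le (fun i : S => c i) r).trans <|
      (Nat.choose_half_div_two_pow_le (by omega)).trans <| Real.sqrt_le_sqrt <| by
        gcongr; exact_mod_cast hm
  calc cprob univ (fun w => signVec w ∈ V)
      ≤ cprob univ (fun u : S → Bool => ∑ i : S, c i * signVec u i = 1 ∨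
          ∑ i : S, c i * signVec u i = -1) * 2 ^ #S / 2 ^ Fintype.card ι := by
        refine cprob_signVec_mem_le_of_restrict hS _ fun w hw => ?_
        have h := signVec_apply_eq_or w j
        rwa [hc _ hw, ← sum_coe_sort S] at h
    _ ≤ (√(2 / (t + 1)) + √(2 / (t + 1))) * 2 ^ finrank ℝ V / 2 ^ Fintype.card ι := by
        gcongr
        · exact (cprob_or_le _ _ _).trans (add_le_add (hLO 1) (hLO (-1)))
        · norm_num
    _ = _ := by ring

theorem cprob_signVec_restrict_mem_le (p : ι → Prop) [DecidablePred p]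
    (W : Submodule ℝ ({i // p i} → ℝ)) :
    cprob univ (fun x : ι → Bool => (fun i : {i // p i} => signVec x i) ∈ W)
      ≤ 2 ^ finrank ℝ W / 2 ^ Fintype.card {i // p i} := by
  refine cprob_univ_le_of_equiv_prod (Equiv.piEquivPiSubtypeProd p fun _ => Bool)
    (by positivity) fun z => le_of_eq_of_le ?_ (cprob_signVec_mem_le W)
  congr! 3 with u
  funext i
  simp [signVec, i.2]

end SignVectorsInSubspaces

theorem card_filter_card_le_mul_pow_le (ι : Type*) [Fintype ι] (t : ℕ) {a : ℕ} (ha : 1 ≤ a) :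
    #(univ.filter fun T : Finset ι => #T ≤ t) * a ^ (Fintype.card ι - t)
      ≤ (1 + a) ^ Fintype.card ι := by
  rw [← Fintype.sum_pow_mul_eq_add_pow, card_eq_sum_ones, sum_mul, sum_filter]
  refine sum_le_sum fun T _ => ?_
  split_ifs with hT
  · rw [one_pow, one_mul, one_mul]
    exact pow_le_pow_right₀ ha (by omega)
  · positivity

section RandomSignMatrices

variable {n : ℕ}

def rowSpanBefore (A : Matrix (Fin n) (Fin n) Bool) (k : Fin n) : Submodule ℝ (Fin n → ℝ) :=
  Submodule.span ℝ ((fun i => signVec (A i)) '' Set.Iio k)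

theorem finrank_rowSpanBefore_le (A : Matrix (Fin n) (Fin n) Bool) (k : Fin n) :
    finrank ℝ (rowSpanBefore A k) ≤ k := by
  rw [rowSpanBefore, ← Finset.coe_Iio, ← Finset.coe_image]
  exact (finrank_span_finset_le_card _).trans (card_image_le.trans (Fin.card_Iio k).le)

theorem rowSpanBefore_congr {A A' : Matrix (Fin n) (Fin n) Bool} {k : Fin n}
    (h : ∀ i < k, A i = A' i) : rowSpanBefore A k = rowSpanBefore A' k := by
  unfold rowSpanBefore
  rw [Set.image_congr fun i hi => by rw [h i hi]]

theorem signVec_mem_rowSpanBefore (A : Matrix (Fin n) (Fin n) Bool) {i k : Fin n} (hi : i < k) :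
    signVec (A i) ∈ rowSpanBefore A k :=
  Submodule.subset_span ⟨i, hi, rfl⟩

theorem exists_signVec_mem_rowSpanBefore_of_det_eq_zero {A : Matrix (Fin n) (Fin n) Bool}
    (h : (sgn2r A).det = 0) : ∃ k, signVec (A k) ∈ rowSpanBefore A k := by
  refine exists_mem_span_image_Iio_of_not_linearIndependent fun hli => ?_
  have : IsUnit (sgn2r A).det := by
    rw [← Matrix.isUnit_iff_isUnit_det, ← Matrix.linearIndependent_rows_iff_isUnit]
    exact hli
  exact not_isUnit_zero (h ▸ this)

/-- Conditioning on all rows other than row `k`, which fixes `rowSpanBefore A k`. -/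
theorem cprob_rowSpanBefore_le (k : Fin n) (Q : Submodule ℝ (Fin n → ℝ) → Prop) {M : ℝ}
    (hM : 0 ≤ M)
    (h : ∀ V : Submodule ℝ (Fin n → ℝ), finrank ℝ V ≤ k → Q V →
      cprob univ (fun x => signVec x ∈ V) ≤ M) :
    cprob univ (fun A : Matrix (Fin n) (Fin n) Bool =>
      Q (rowSpanBefore A k) ∧ signVec (A k) ∈ rowSpanBefore A k) ≤ M := by
  refine cprob_univ_le_of_equiv_prod (Equiv.funSplitAt k (Fin n → Bool)) hM fun y => ?_
  set V := rowSpanBefore ((Equiv.funSplitAt k (Fin n → Bool)).symm (fun _ => true, y)) k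
  have hV : ∀ x, rowSpanBefore ((Equiv.funSplitAt k (Fin n → Bool)).symm (x, y)) k = V :=
    fun x => rowSpanBefore_congr fun i hi => by simp [hi.ne]
  simp only [hV, Equiv.funSplitAt_symm_apply, dite_true]
  by_cases hQ : Q V
  · simpa [hQ] using h V (finrank_rowSpanBefore_le _ k) hQ
  · simpa [hQ, cprob] using hM

/-- Conditioning on all columns other than column `j`: the first `k` entries of column `j` must
lie in the span of the corresponding parts of the columns in `T`. -/
theorem cprob_coordDeterminedBy_rowSpanBefore_le (k j : Fin n) (T : Finset (Fin n)) :
    cprob univ (fun A : Matrix (Fin n) (Fin n) Bool =>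
      j ∉ T ∧ (rowSpanBefore A k).CoordDeterminedBy j T) ≤ 2 ^ #T / 2 ^ (k : ℕ) := by
  by_cases hj : j ∈ T
  · simpa [hj, cprob] using by positivity
  let e : Matrix (Fin n) (Fin n) Bool ≃ (Fin n → Bool) × ({l // l ≠ j} → Fin n → Bool) :=
    (Equiv.piComm fun _ _ => Bool).trans (Equiv.funSplitAt j (Fin n → Bool))
  refine cprob_univ_le_of_equiv_prod e (by positivity) fun y => ?_
  let W : Submodule ℝ ({a // a < k} → ℝ) := Submodule.span ℝ (Set.range fun i : T =>
    fun a : {a // a < k} => signVec (y ⟨i, ne_of_mem_of_not_mem i.2 hj⟩) a)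
  refine (cprob_mono fun x _ hx => ?_).trans
    ((cprob_signVec_restrict_mem_le (· < k) W).trans ?_)
  · obtain ⟨-, c, hc⟩ := hx
    set A := e.symm (x, y)
    have hAj : ∀ a, A a j = x a := fun a =>
      show (Equiv.funSplitAt j _).symm (x, y) j a = x a by simp
    have hAi : ∀ i (hi : i ≠ j) a, A a i = y ⟨i, hi⟩ a := fun i hi a =>
      show (Equiv.funSplitAt j _).symm (x, y) i a = _ by simp [hi]
    have hcol : (fun a : {a // a < k} => signVec x a) =
        ∑ i : T, c i • fun a : {a // a < k} => signVec (y ⟨i, ne_of_mem_of_not_mem i.2 hj⟩) a := by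
      funext a
      have := hc _ (signVec_mem_rowSpanBefore A a.2)
      rw [← sum_coe_sort] at this
      simp only [Finset.sum_apply, Pi.smul_apply, smul_eq_mul, signVec, hAj] at this ⊢
      rw [this]
      exact sum_congr rfl fun i _ => by rw [hAi i (ne_of_mem_of_not_mem i.2 hj)]
    rw [hcol]
    exact Submodule.sum_mem _ fun i _ => Submodule.smul_mem _ _ (Submodule.subset_span ⟨i, rfl⟩)
  · rw [Fintype.card_subtype, filter_gt_eq_Iio, Fin.card_Iio]
    gcongr
    · norm_num
    · exact (finrank_range_le_card _).trans (Fintype.card_coe T).le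

theorem cprob_hasShortCoordRelation_rowSpanBefore_le (k : Fin n) (t : ℕ) :
    cprob univ (fun A : Matrix (Fin n) (Fin n) Bool => (rowSpanBefore A k).HasShortCoordRelation t)
      ≤ n * #(univ.filter fun T : Finset (Fin n) => #T ≤ t) * (2 ^ t / 2 ^ (k : ℕ)) := by
  let P := (univ : Finset (Fin n)) ×ˢ (univ.filter fun T : Finset (Fin n) => #T ≤ t)
  calc _ ≤ cprob univ (fun A : Matrix (Fin n) (Fin n) Bool =>
          ∃ p ∈ P, p.1 ∉ p.2 ∧ (rowSpanBefore A k).CoordDeterminedBy p.1 p.2) :=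
        cprob_mono fun A _ ⟨j, T, hj, hT, h⟩ => ⟨(j, T), by simp [P, hT], hj, h⟩
    _ ≤ ∑ p ∈ P, cprob univ (fun A : Matrix (Fin n) (Fin n) Bool =>
          p.1 ∉ p.2 ∧ (rowSpanBefore A k).CoordDeterminedBy p.1 p.2) :=
        cprob_exists_le_sum _ _ _
    _ ≤ ∑ _p ∈ P, (2 ^ t / 2 ^ (k : ℕ) : ℝ) := sum_le_sum fun p hp =>
        (cprob_coordDeterminedBy_rowSpanBefore_le k p.1 p.2).trans <| by
          gcongr
          · norm_num
          · exact (mem_filter.mp (mem_product.mp hp).2).2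
    _ = _ := by
        rw [sum_const, card_product, card_univ, Fintype.card_fin, nsmul_eq_mul]; push_cast; ring

/-- Odlyzko's bound for `k < m`; for `m ≤ k` split according to whether the first `k` rows have a
short column relation. -/
theorem cprob_signVec_mem_rowSpanBefore_le (k : Fin n) (m t : ℕ) :
    cprob univ (fun A : Matrix (Fin n) (Fin n) Bool => signVec (A k) ∈ rowSpanBefore A k)
      ≤ 2 ^ m / 2 ^ n + 2 * √(2 / (t + 1)) * 2 ^ (k : ℕ) / 2 ^ n
        + n * #(univ.filter fun T : Finset (Fin n) => #T ≤ t) * (2 ^ t / 2 ^ m) := by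
  have hOdlyzko := cprob_rowSpanBefore_le k (fun _ => True) (M := 2 ^ (k : ℕ) / 2 ^ n)
    (by positivity) fun V hV _ =>
      (cprob_signVec_mem_le V).trans (by rw [Fintype.card_fin]; gcongr; norm_num)
  have hgood := cprob_rowSpanBefore_le k (fun V => ¬ V.HasShortCoordRelation t)
    (M := 2 * √(2 / (t + 1)) * 2 ^ (k : ℕ) / 2 ^ n) (by positivity) fun V hV hQ =>
      (cprob_signVec_mem_le_of_not_hasShortCoordRelation hQ
        (by rw [Fintype.card_fin]; omega)).trans (by rw [Fintype.card_fin]; gcongr; norm_num)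
  have hD : 0 ≤ n * #(univ.filter fun T : Finset (Fin n) => #T ≤ t) * (2 ^ t / (2 : ℝ) ^ m) := by
    positivity
  rcases lt_or_ge (k : ℕ) m with hkm | hmk
  · have : (2 : ℝ) ^ (k : ℕ) / 2 ^ n ≤ 2 ^ m / 2 ^ n := by gcongr; norm_num
    have := (cprob_mono fun A _ hA => ⟨trivial, hA⟩).trans (hOdlyzko.trans this)
    linarith [show 0 ≤ 2 * √(2 / (t + 1)) * 2 ^ (k : ℕ) / (2 : ℝ) ^ n by positivity]
  · have hshort := (cprob_hasShortCoordRelation_rowSpanBefore_le k t).trans <|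
      show _ ≤ n * #(univ.filter fun T : Finset (Fin n) => #T ≤ t) * (2 ^ t / (2 : ℝ) ^ m) by
        gcongr; norm_num
    have := (cprob_mono (p := fun A : Matrix (Fin n) (Fin n) Bool =>
        signVec (A k) ∈ rowSpanBefore A k) fun A _ hA =>
      (em ((rowSpanBefore A k).HasShortCoordRelation t)).imp_right fun h => ⟨h, hA⟩).trans
      (cprob_or_le univ (fun A => (rowSpanBefore A k).HasShortCoordRelation t)
        fun A => ¬ (rowSpanBefore A k).HasShortCoordRelation t ∧ signVec (A k) ∈ rowSpanBefore A k)
    linarith [show (0 : ℝ) ≤ 2 ^ m / 2 ^ n by positivity]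

end RandomSignMatrices

theorem cprob_det_eq_zero_le (n m t : ℕ) :
    cprob univ (fun A : Matrix (Fin n) (Fin n) Bool => (sgn2r A).det = 0)
      ≤ n * (2 ^ m / 2 ^ n) + 2 * √(2 / (t + 1))
        + n * (n * #(univ.filter fun T : Finset (Fin n) => #T ≤ t) * (2 ^ t / 2 ^ m)) := by
  have hgeom : ∑ k : Fin n, (2 : ℝ) ^ (k : ℕ) ≤ 2 ^ n := by
    rw [Fin.sum_univ_eq_sum_range (fun k => (2 : ℝ) ^ k), geom_sum_eq (by norm_num)]
    linarith
  calc cprob univ (fun A : Matrix (Fin n) (Fin n) Bool => (sgn2r A).det = 0)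
      ≤ cprob univ (fun A : Matrix (Fin n) (Fin n) Bool =>
          ∃ k ∈ univ, signVec (A k) ∈ rowSpanBefore A k) :=
        cprob_mono fun A _ h => by simpa using exists_signVec_mem_rowSpanBefore_of_det_eq_zero h
    _ ≤ ∑ k : Fin n, cprob univ (fun A : Matrix (Fin n) (Fin n) Bool =>
          signVec (A k) ∈ rowSpanBefore A k) := cprob_exists_le_sum _ _ _
    _ ≤ ∑ k : Fin n, (2 ^ m / 2 ^ n + 2 * √(2 / (t + 1)) * 2 ^ (k : ℕ) / 2 ^ n
          + n * #(univ.filter fun T : Finset (Fin n) => #T ≤ t) * (2 ^ t / 2 ^ m)) :=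
        sum_le_sum fun k _ => cprob_signVec_mem_rowSpanBefore_le k m t
    _ ≤ _ := by
        simp only [sum_add_distrib, sum_const, card_univ, Fintype.card_fin, nsmul_eq_mul,
          ← sum_div, ← mul_sum]
        gcongr
        rw [mul_div_assoc]
        exact mul_le_of_le_one_right (by positivity) ((div_le_one (by positivity)).mpr hgeom)

theorem Nat.lt_two_pow_div_two_pow_add (n c : ℕ) : n < 2 ^ (n / 2 ^ c + c) := by
  calc n < 2 ^ c * (n / 2 ^ c + 1) := Nat.lt_mul_div_succ n (by positivity)
    _ ≤ 2 ^ c * 2 ^ (n / 2 ^ c) := by gcongr; exact (n / 2 ^ c).lt_two_pow_self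
    _ = 2 ^ (n / 2 ^ c + c) := by ring

theorem le_one_div_sqrt_of_mul_le_one {x y : ℝ} (hy : 1 ≤ y) (h : x * y ≤ 1) : x ≤ 1 / √y := by
  have hsqrt : √y ≤ y := (Real.sqrt_le_left (by linarith)).mpr (by nlinarith)
  calc x ≤ 1 / y := by rwa [le_div_iff₀ (by linarith)]
    _ ≤ 1 / √y := by gcongr

/-- With `t = n / 64`: at most `9 ^ n / 8 ^ (n - t)` sets of size `≤ t`, and `9 ^ 8 ≤ 2 ^ 26`. -/
theorem pow_three_mul_card_small_finsets_le {n : ℕ} (hn : 1000 ≤ n) :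
    n ^ 3 * #(univ.filter fun T : Finset (Fin n) => #T ≤ n / 64) * 2 ^ (n / 64) ≤ 2 ^ (n / 2) := by
  have hcount := card_filter_card_le_mul_pow_le (Fin n) (n / 64) (a := 8) (by norm_num)
  rw [Fintype.card_fin] at hcount
  have hnine : 9 ^ n ≤ 2 ^ (26 * (n / 8 + 1)) :=
    calc 9 ^ n ≤ 9 ^ (8 * (n / 8 + 1)) := Nat.pow_le_pow_right (by norm_num) (by omega)
      _ ≤ (2 ^ 26) ^ (n / 8 + 1) := by rw [pow_mul]; exact Nat.pow_le_pow_left (by norm_num) _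
      _ = _ := by rw [← pow_mul]
  have hcube : n ^ 3 ≤ 2 ^ (3 * (n / 32 + 5)) := by
    rw [pow_mul']; exact Nat.pow_le_pow_left (Nat.lt_two_pow_div_two_pow_add n 5).le 3
  refine Nat.le_of_mul_le_mul_right (c := 8 ^ (n - n / 64)) ?_ (by positivity)
  calc _ = n ^ 3 * 2 ^ (n / 64) * (#(univ.filter fun T : Finset (Fin n) => #T ≤ n / 64)
          * 8 ^ (n - n / 64)) := by ring
    _ ≤ 2 ^ (3 * (n / 32 + 5)) * 2 ^ (n / 64) * 2 ^ (26 * (n / 8 + 1)) := by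
        gcongr; exact hcount.trans hnine
    _ ≤ 2 ^ (n / 2) * 8 ^ (n - n / 64) := by
        rw [show (8 : ℕ) = 2 ^ 3 by rfl, ← pow_mul, ← pow_add, ← pow_add, ← pow_add]
        exact Nat.pow_le_pow_right (by norm_num) (by omega)

theorem natCast_mul_two_pow_div_two_pow_le {n : ℕ} (hn : 64 ≤ n) :
    n * ((2 : ℝ) ^ (n / 2) / 2 ^ n) ≤ 1 / √n := by
  refine le_one_div_sqrt_of_mul_le_one (by exact_mod_cast (by omega : 1 ≤ n)) ?_
  have hsq := Nat.pow_le_pow_left (Nat.lt_two_pow_div_two_pow_add n 5).le 2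
  rw [← pow_mul] at hsq
  have : n ^ 2 * 2 ^ (n / 2) ≤ 2 ^ n :=
    calc n ^ 2 * 2 ^ (n / 2) ≤ 2 ^ ((n / 2 ^ 5 + 5) * 2) * 2 ^ (n / 2) := by gcongr
      _ ≤ 2 ^ n := by rw [← pow_add]; exact Nat.pow_le_pow_right (by norm_num) (by omega)
  rw [show (n : ℝ) * (2 ^ (n / 2) / 2 ^ n) * n = ((n ^ 2 * 2 ^ (n / 2) : ℕ) : ℝ) / 2 ^ n by
    push_cast; ring, div_le_one (by positivity)]
  exact_mod_cast this

theorem two_mul_sqrt_two_div_le {n : ℕ} (hn : 1 ≤ n) :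
    2 * √(2 / ((n / 64 : ℕ) + 1 : ℝ)) ≤ 23 / √n := by
  have hn64 : (n : ℝ) ≤ 64 * ((n / 64 : ℕ) + 1 : ℝ) := by
    exact_mod_cast (show n ≤ 64 * (n / 64 + 1) by omega)
  have : √(2 / ((n / 64 : ℕ) + 1 : ℝ) * n) ≤ 23 / 2 := by
    refine (Real.sqrt_le_left (by norm_num)).mpr ?_
    rw [div_mul_eq_mul_div, div_le_iff₀ (by positivity)]
    linarith
  rw [le_div_iff₀ (Real.sqrt_pos.mpr (by exact_mod_cast hn)), mul_assoc,
    ← Real.sqrt_mul (by positivity)]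
  linarith

theorem natCast_mul_card_small_finsets_le {n : ℕ} (hn : 1000 ≤ n) :
    n * (n * #(univ.filter fun T : Finset (Fin n) => #T ≤ n / 64)
      * ((2 : ℝ) ^ (n / 64) / 2 ^ (n / 2))) ≤ 1 / √n := by
  refine le_one_div_sqrt_of_mul_le_one (by exact_mod_cast (by omega : 1 ≤ n)) ?_
  rw [show (n : ℝ) * (n * #(univ.filter fun T : Finset (Fin n) => #T ≤ n / 64)
        * (2 ^ (n / 64) / 2 ^ (n / 2))) * n
      = ((n ^ 3 * #(univ.filter fun T : Finset (Fin n) => #T ≤ n / 64) * 2 ^ (n / 64) : ℕ) : ℝ)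
        / 2 ^ (n / 2) by push_cast; ring,
    div_le_one (by positivity)]
  exact_mod_cast pow_three_mul_card_small_finsets_le hn

/-- **Komlós' theorem.**  An `n × n` matrix with iid uniform `±1` entries (modelled as a
uniform random Boolean matrix, with `true ↦ +1`, `false ↦ -1`) is singular with
probability `O(n^{-1/2})`. -/
theorem komlos_singularity :
    ∃ C : ℝ, 0 < C ∧ ∃ N : ℕ, ∀ n, N ≤ n →
      cprob (Finset.univ : Finset (Matrix (Fin n) (Fin n) Bool))
        (fun A => (sgn2r A).det = 0) ≤ C * (n : ℝ) ^ (-(1/2 : ℝ)) := by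
  refine ⟨25, by norm_num, 1000, fun n hn => ?_⟩
  rw [Real.rpow_neg (Nat.cast_nonneg n), ← Real.sqrt_eq_rpow, ← one_div]
  calc _ ≤ _ := cprob_det_eq_zero_le n (n / 2) (n / 64)
    _ ≤ 1 / √n + 23 / √n + 1 / √n := by
        gcongr
        · exact natCast_mul_two_pow_div_two_pow_le (by omega)
        · exact two_mul_sqrt_two_div_le (by omega)
        · exact natCast_mul_card_small_finsets_le hn
    _ = 25 * (1 / √n) := by ring
end
end

section
/- Let M be a uniform random element of M_{n,d} and fix distinct i₁, i₂ ∈ [n]. Conditional on M, let π : Ex_M(i₁,i₂) → Ex_M(i₂,i₁) be a uniform random bijection, and let ξ : [n] → {±1} be a sequence of iid uniform signs independent of all other variables. Form M̃ from M by replacing, for each j ∈ Ex_M(i₁,i₂), the 2×2 minor of M with rows (i₁,i₂) and columns (j, π(j)) (which equals the identity matrix I = [[1,0],[0,1]]) by I if ξ(j) = +1 and by J = [[0,1],[1,0]] if ξ(j) = −1, leaving all other entries unchanged. Then M̃ has the same distribution as M; in particular M̃ is a uniform random element of M_{n,d}. -/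
open scoped Classical

noncomputable section

/-- `M_{n,d}`: 0/1 matrices all of whose row and column sums equal `d`. -/
def regSet (n d : ℕ) : Finset (Matrix (Fin n) (Fin n) Bool) :=
  Finset.univ.filter fun A =>
    (∀ i, (Finset.univ.filter fun j => A i j = true).card = d) ∧
    (∀ j, (Finset.univ.filter fun i => A i j = true).card = d)

/-- `Ex_M(i₁,i₂) = N_M(i₁) \ N_M(i₂)`: columns `j` whose minor at rows `(i₁,i₂)` is
`(1,0)ᵀ`. -/
def exSet {n : ℕ} (M : Matrix (Fin n) (Fin n) Bool) (i₁ i₂ : Fin n) : Finset (Fin n) :=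
  Finset.univ.filter fun j => M i₁ j = true ∧ M i₂ j = false

/-- The matrix obtained from `M` by switching, for each `j ∈ T`, the `2 × 2` minor at
rows `(i₁,i₂)` and columns `(j, σ j)`: it is set to `I = [[1,0],[0,1]]` if `ξ j = true`
(sign `+1`) and to `J = [[0,1],[1,0]]` if `ξ j = false` (sign `-1`).  Here the
bijection `π : T → σ(T)` is encoded as (the restriction to `T` of) a permutation `σ`. -/
def shuffleAt {n : ℕ} (M : Matrix (Fin n) (Fin n) Bool) (i₁ i₂ : Fin n)
    (T : Finset (Fin n)) (σ : Equiv.Perm (Fin n)) (ξ : Fin n → Bool) :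
    Matrix (Fin n) (Fin n) Bool :=
  Matrix.of fun i j =>
    if i = i₁ then
      if j ∈ T then ξ j
      else if σ⁻¹ j ∈ T then !(ξ (σ⁻¹ j))
      else M i j
    else if i = i₂ then
      if j ∈ T then !(ξ j)
      else if σ⁻¹ j ∈ T then ξ (σ⁻¹ j)
      else M i j
    else M i j

/-- Uniform distribution on a finite set, with a default value when it is empty. -/
def uniformOn {α : Type*} (s : Finset α) (a₀ : α) : PMF α :=
  if h : s.Nonempty then PMF.uniformOfFinset s h else PMF.pure a₀

/-!
For `σ` mapping `Ex(i₁,i₂)` onto `Ex(i₂,i₁)` and signs `ξ`, the shuffled matrix is `M` with the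
entries of rows `i₁, i₂` permuted by the involution `ρ` that swaps `j ↔ σ j` whenever `ξ j = -1`.
Seen from the result `A`, the same pairs come from the data `(ρσρ, ξ ∘ ρ)`, whose switching
involution is again `ρ`. So `(σ, ξ) ↦ (ρσρ, ξ ∘ ρ)` is a bijection between the data taking `M` to
`A` and those taking `A` to `M`, and conjugation by `ρ` shows that `M` and `A` admit equally many
`σ`. Hence the transition kernel is symmetric on `M_{n,d}`, which it preserves, and a symmetric
kernel fixes the uniform distribution.
-/

open Finset Equiv
open scoped ENNReal

theorem PMF.bind_uniformOfFinset_eq_self_of_symm {α : Type*} (s : Finset α) (hs : s.Nonempty)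
    (f : α → PMF α) (hsupp : ∀ a ∈ s, ∀ b ∉ s, f a b = 0)
    (hsymm : ∀ a ∈ s, ∀ b ∈ s, f a b = f b a) :
    (PMF.uniformOfFinset s hs).bind f = PMF.uniformOfFinset s hs := by
  ext b
  have hvanish : ∀ a ∉ s, PMF.uniformOfFinset s hs a * f a b = 0 := fun a ha => by
    rw [PMF.uniformOfFinset_apply_of_notMem (hs := hs) ha, zero_mul]
  rw [PMF.bind_apply, tsum_eq_sum hvanish,
    Finset.sum_congr rfl fun a ha => by rw [PMF.uniformOfFinset_apply_of_mem (hs := hs) ha],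
    ← Finset.mul_sum]
  by_cases hb : b ∈ s
  · have hmass : ∑ a ∈ s, f b a = 1 := by
      rw [← (f b).tsum_coe, tsum_eq_sum (hsupp b hb)]
    rw [Finset.sum_congr rfl fun a ha => hsymm a ha b hb, hmass, mul_one,
      PMF.uniformOfFinset_apply_of_mem (hs := hs) hb]
  · rw [Finset.sum_eq_zero fun a ha => hsupp a ha b hb, mul_zero,
      PMF.uniformOfFinset_apply_of_notMem (hs := hs) hb]

theorem PMF.bind_uniformOfFinset_map_uniformOfFintype_apply {α β γ : Type*} [Fintype β]
    [Nonempty β] [DecidableEq γ] (s : Finset α) (hs : s.Nonempty) (f : α → β → γ) (c : γ) :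
    ((PMF.uniformOfFinset s hs).bind fun a => (PMF.uniformOfFintype β).map (f a)) c
      = #{p ∈ s ×ˢ univ | f p.1 p.2 = c} / (#s * Fintype.card β) := by
  have hvanish : ∀ a ∉ s,
      PMF.uniformOfFinset s hs a * (PMF.uniformOfFintype β).map (f a) c = 0 := fun a ha => by
    rw [PMF.uniformOfFinset_apply_of_notMem (hs := hs) ha, zero_mul]
  rw [PMF.bind_apply, tsum_eq_sum hvanish,
    Finset.sum_congr rfl fun a ha => by rw [PMF.uniformOfFinset_apply_of_mem (hs := hs) ha]]
  simp only [PMF.map_apply, tsum_fintype, PMF.uniformOfFintype_apply]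
  rw [Finset.card_filter, Finset.sum_product]
  simp only [Nat.cast_sum, Nat.cast_ite, Nat.cast_one, Nat.cast_zero, div_eq_mul_inv,
    Finset.sum_mul]
  rw [ENNReal.mul_inv (by simp) (by simp)]
  refine Finset.sum_congr rfl fun a _ => ?_
  rw [Finset.mul_sum]
  refine Finset.sum_congr rfl fun b _ => ?_
  simp only [eq_comm (a := c)]
  split_ifs <;> simp

theorem Equiv.Perm.card_filter_comp {α : Type*} [Fintype α] (τ : Perm α) (p : α → Prop)
    [DecidablePred p] : #{x | p (τ x)} = #{x | p x} :=
  Finset.card_equiv τ (by simp)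

section Perm

variable {α : Type*} [DecidableEq α]

theorem Function.Involutive.mem_finset_image_iff {f : α → α} (hf : Function.Involutive f)
    {s : Finset α} {y : α} : y ∈ s.image f ↔ f y ∈ s := by
  refine ⟨fun hy => ?_, fun hy => Finset.mem_image.2 ⟨f y, hy, hf y⟩⟩
  obtain ⟨x, hx, rfl⟩ := Finset.mem_image.1 hy
  rwa [hf x]

theorem Equiv.Perm.mem_finset_image_iff (σ : Perm α) {s : Finset α} {y : α} :
    y ∈ s.image σ ↔ σ⁻¹ y ∈ s := by
  rw [Finset.mem_image]
  exact ⟨fun ⟨x, hx, hxy⟩ => by simpa [← hxy] using hx, fun h => ⟨_, h, by simp⟩⟩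

variable [Fintype α]

theorem Equiv.Perm.exists_image_eq {s t : Finset α} (h : #s = #t) :
    ∃ σ : Perm α, s.image σ = t := by
  let σ : Perm α := (s.equivOfCardEq h).extendSubtype
  have hsub : s.image σ ⊆ t := Finset.image_subset_iff.2 fun x hx =>
    (s.equivOfCardEq h).extendSubtype_mem x hx
  refine ⟨σ, Finset.eq_of_subset_of_card_le hsub ?_⟩
  rw [Finset.card_image_of_injective _ σ.injective, h]

theorem Equiv.Perm.card_image_eq_conj (ρ : Perm α) (s t : Finset α) :
    #{σ : Perm α | s.image σ = t} = #{σ : Perm α | (s.image ρ).image σ = t.image ρ} := by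
  have image_conj : ∀ (τ σ : Perm α) (s : Finset α),
      (s.image τ).image (τ * σ * τ⁻¹) = (s.image σ).image τ := by
    intro τ σ s
    simp [Finset.image_image, Function.comp_def]
  refine Finset.card_nbij' (fun σ => ρ * σ * ρ⁻¹) (fun σ => ρ⁻¹ * σ * ρ) ?_ ?_ ?_ ?_
  · intro σ
    simp only [coe_filter, mem_univ, true_and, Set.mem_ofPred_eq]
    rintro rfl
    exact image_conj ρ σ s
  · intro σ
    simp only [coe_filter, mem_univ, true_and, Set.mem_ofPred_eq]
    intro h
    have := image_conj ρ⁻¹ σ (s.image ρ)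
    rw [inv_inv, h] at this
    simpa [Finset.image_image, Function.comp_def] using this
  · intro σ _
    simp [mul_assoc]
  · intro σ _
    simp [mul_assoc]

end Perm

section Switch

variable {α : Type*} [DecidableEq α]

/-- Swaps `x` and `σ x` for every `x ∈ T` with `ξ x = false`. The guards `σ x ∉ T` and `x ∉ T`
make it an involution for every `σ`; they hold automatically when `T` and `σ(T)` are disjoint. -/
def switchFun (T : Finset α) (σ : Perm α) (ξ : α → Bool) (x : α) : α :=
  if x ∈ T ∧ σ x ∉ T ∧ ξ x = false then σ x
  else if σ⁻¹ x ∈ T ∧ x ∉ T ∧ ξ (σ⁻¹ x) = false then σ⁻¹ x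
  else x

theorem switchFun_involutive (T : Finset α) (σ : Perm α) (ξ : α → Bool) :
    Function.Involutive (switchFun T σ ξ) := by
  intro x
  unfold switchFun
  split_ifs <;> simp_all

def switchPerm (T : Finset α) (σ : Perm α) (ξ : α → Bool) : Perm α :=
  (switchFun_involutive T σ ξ).toPerm

variable {T : Finset α} {σ : Perm α} {ξ : α → Bool}

theorem switchPerm_involutive : Function.Involutive (switchPerm T σ ξ) :=
  switchFun_involutive T σ ξ

theorem switchPerm_inv : (switchPerm T σ ξ)⁻¹ = switchPerm T σ ξ :=
  rfl

theorem switchPerm_apply_of_mem {x : α} (hT : Disjoint T (T.image σ)) (hx : x ∈ T) :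
    switchPerm T σ ξ x = if ξ x then x else σ x := by
  have : σ x ∉ T := Finset.disjoint_right.1 hT (Finset.mem_image_of_mem σ hx)
  cases h : ξ x <;> simp [switchPerm, switchFun, hx, this, h]

theorem switchPerm_apply_of_inv_mem {x : α} (hT : Disjoint T (T.image σ)) (hx : σ⁻¹ x ∈ T) :
    switchPerm T σ ξ x = if ξ (σ⁻¹ x) then x else σ⁻¹ x := by
  have : x ∉ T := Finset.disjoint_right.1 hT (σ.mem_finset_image_iff.2 hx)
  rw [Perm.inv_def] at hx ⊢
  cases h : ξ (σ.symm x) <;> simp [switchPerm, switchFun, hx, this, h]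

theorem switchPerm_apply_of_notMem {x : α} (hx : x ∉ T) (hx' : σ⁻¹ x ∉ T) :
    switchPerm T σ ξ x = x := by
  rw [Perm.inv_def] at hx'
  simp [switchPerm, switchFun, hx, hx']

theorem switchPerm_apply_eq_or_mem (x : α) :
    switchPerm T σ ξ x = x ∨ (x ∈ T ∪ T.image σ ∧ switchPerm T σ ξ x ∈ T ∪ T.image σ) := by
  simp only [switchPerm, Function.Involutive.coe_toPerm, switchFun, Finset.mem_union,
    σ.mem_finset_image_iff]
  split_ifs <;> simp_all

theorem switchPerm_switch :
    switchPerm (T.image (switchPerm T σ ξ)) (switchPerm T σ ξ * σ * switchPerm T σ ξ)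
      (ξ ∘ switchPerm T σ ξ) = switchPerm T σ ξ := by
  set ρ := switchPerm T σ ξ with hρdef
  have hρ : Function.Involutive ρ := switchPerm_involutive
  have hinv : (ρ * σ * ρ)⁻¹ = ρ * σ⁻¹ * ρ := by
    rw [mul_inv_rev, mul_inv_rev, hρdef, switchPerm_inv, mul_assoc]
  ext x
  obtain ⟨y, rfl⟩ : ∃ y, x = ρ y := ⟨ρ x, (hρ x).symm⟩
  have hy : ρ y = switchFun T σ ξ y := rfl
  show switchFun _ _ _ (ρ y) = ρ (ρ y)
  unfold switchFun at hy ⊢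
  simp only [hρ.mem_finset_image_iff, hinv, Perm.mul_apply, Function.comp_apply, hρ _]
  -- the branches met at `ρ y` are those met at `y`, and lead back to `y`
  split_ifs at hy ⊢
  · rw [← hy, hρ]
  · rw [← hy, hρ]
  · exact hy

end Switch

section Matrix

variable {m k R : Type*} [DecidableEq m]

def permuteTwoRows (M : Matrix m k R) (i₁ i₂ : m) (ρ : Perm k) : Matrix m k R :=
  Matrix.of fun i j => if i = i₁ ∨ i = i₂ then M i (ρ j) else M i j

theorem permuteTwoRows_permuteTwoRows (M : Matrix m k R) (i₁ i₂ : m) {ρ : Perm k}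
    (hρ : Function.Involutive ρ) : permuteTwoRows (permuteTwoRows M i₁ i₂ ρ) i₁ i₂ ρ = M := by
  ext i j
  by_cases hi : i = i₁ ∨ i = i₂ <;> simp [permuteTwoRows, hi, hρ j]

variable {n d : ℕ} {M A : Matrix (Fin n) (Fin n) Bool}

theorem mem_regSet_of_perm (hM : M ∈ regSet n d)
    (hrow : ∀ i, ∃ τ : Perm (Fin n), ∀ j, A i j = M i (τ j))
    (hcol : ∀ j, ∃ τ : Perm (Fin n), ∀ i, A i j = M (τ i) j) : A ∈ regSet n d := by
  simp only [regSet, Finset.mem_filter, Finset.mem_univ, true_and] at hM ⊢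
  refine ⟨fun i => ?_, fun j => ?_⟩
  · obtain ⟨τ, hτ⟩ := hrow i
    simp only [hτ, τ.card_filter_comp (fun j => M i j = true), hM.1 i]
  · obtain ⟨τ, hτ⟩ := hcol j
    simp only [hτ, τ.card_filter_comp (fun i => M i j = true), hM.2 j]

theorem permuteTwoRows_mem_regSet {i₁ i₂ : Fin n} {ρ : Perm (Fin n)} (hM : M ∈ regSet n d)
    (hρ : ∀ j, ρ j = j ∨ (M i₁ j ≠ M i₂ j ∧ M i₁ (ρ j) ≠ M i₂ (ρ j))) :
    permuteTwoRows M i₁ i₂ ρ ∈ regSet n d := by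
  refine mem_regSet_of_perm hM (fun i => ⟨if i = i₁ ∨ i = i₂ then ρ else 1, fun j => ?_⟩)
    (fun j => ?_)
  · by_cases hi : i = i₁ ∨ i = i₂ <;> simp [permuteTwoRows, hi]
  have hcol : M i₁ (ρ j) = M i₁ j ∧ M i₂ (ρ j) = M i₂ j ∨
      M i₁ (ρ j) = M i₂ j ∧ M i₂ (ρ j) = M i₁ j := by
    rcases hρ j with h | ⟨h, h'⟩
    · simp [h]
    · revert h h'
      cases M i₁ j <;> cases M i₂ j <;> cases M i₁ (ρ j) <;> cases M i₂ (ρ j) <;> simp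
  rcases hcol with h | h
  · refine ⟨1, fun i => ?_⟩
    by_cases hi : i = i₁ ∨ i = i₂
    · rcases hi with rfl | rfl <;> simp [permuteTwoRows, h]
    · simp [permuteTwoRows, hi]
  · refine ⟨Equiv.swap i₁ i₂, fun i => ?_⟩
    by_cases hi : i = i₁ ∨ i = i₂
    · rcases hi with rfl | rfl <;> simp [permuteTwoRows, h]
    · simp [permuteTwoRows, hi, Equiv.swap_apply_of_ne_of_ne (not_or.1 hi).1 (not_or.1 hi).2]

end Matrix

section Shuffle

variable {n d : ℕ} {M A : Matrix (Fin n) (Fin n) Bool} {i₁ i₂ : Fin n} {σ : Perm (Fin n)}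

theorem mem_exSet {a b j : Fin n} : j ∈ exSet M a b ↔ M a j = true ∧ M b j = false := by
  simp [exSet]

theorem disjoint_exSet : Disjoint (exSet M i₁ i₂) (exSet M i₂ i₁) := by
  rw [Finset.disjoint_left]
  intro j h h'
  simp_all [mem_exSet]

theorem exSet_permuteTwoRows {ρ : Perm (Fin n)} (hρ : Function.Involutive ρ) {a b : Fin n}
    (ha : a = i₁ ∨ a = i₂) (hb : b = i₁ ∨ b = i₂) :
    exSet (permuteTwoRows M i₁ i₂ ρ) a b = (exSet M a b).image ρ := by
  ext j
  rw [hρ.mem_finset_image_iff]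
  simp [exSet, permuteTwoRows, ha, hb]

theorem card_exSet_comm (hM : M ∈ regSet n d) : #(exSet M i₁ i₂) = #(exSet M i₂ i₁) := by
  have hsdiff : ∀ a b, exSet M a b =
      ({j | M a j = true} : Finset (Fin n)) \ ({j | M b j = true} : Finset (Fin n)) := by
    intro a b
    ext j
    simp [mem_exSet]
  simp only [regSet, Finset.mem_filter, Finset.mem_univ, true_and] at hM
  rw [hsdiff, hsdiff, card_sdiff_eq_card_sdiff_iff, hM.1, hM.1]

theorem inv_mem_exSet (hσ : (exSet M i₁ i₂).image σ = exSet M i₂ i₁) {j : Fin n} :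
    σ⁻¹ j ∈ exSet M i₁ i₂ ↔ M i₂ j = true ∧ M i₁ j = false := by
  rw [← σ.mem_finset_image_iff, hσ, mem_exSet]

theorem shuffleAt_eq_permuteTwoRows (h12 : i₁ ≠ i₂)
    (hσ : (exSet M i₁ i₂).image σ = exSet M i₂ i₁) (ξ : Fin n → Bool) :
    shuffleAt M i₁ i₂ (exSet M i₁ i₂) σ ξ
      = permuteTwoRows M i₁ i₂ (switchPerm (exSet M i₁ i₂) σ ξ) := by
  have hdisj : Disjoint (exSet M i₁ i₂) ((exSet M i₁ i₂).image σ) := hσ ▸ disjoint_exSet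
  ext i j
  simp only [shuffleAt, permuteTwoRows, Matrix.of_apply]
  by_cases hj : j ∈ exSet M i₁ i₂
  · rw [switchPerm_apply_of_mem hdisj hj]
    have := (inv_mem_exSet hσ (j := σ j)).1 (by simpa using hj)
    have := mem_exSet.1 hj
    cases h : ξ j <;> by_cases hi : i = i₁ <;> simp_all
  by_cases hj' : σ⁻¹ j ∈ exSet M i₁ i₂
  · rw [switchPerm_apply_of_inv_mem hdisj hj']
    have := (inv_mem_exSet hσ).1 hj'
    have := mem_exSet.1 hj'
    cases h : ξ (σ⁻¹ j) <;> by_cases hi : i = i₁ <;> simp_all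
  · rw [switchPerm_apply_of_notMem hj hj']
    simp only [hj, hj', if_false, ite_self]

theorem shuffleAt_mem_regSet (h12 : i₁ ≠ i₂) (hM : M ∈ regSet n d)
    (hσ : (exSet M i₁ i₂).image σ = exSet M i₂ i₁) (ξ : Fin n → Bool) :
    shuffleAt M i₁ i₂ (exSet M i₁ i₂) σ ξ ∈ regSet n d := by
  rw [shuffleAt_eq_permuteTwoRows h12 hσ]
  refine permuteTwoRows_mem_regSet hM fun j => (switchPerm_apply_eq_or_mem j).imp_right ?_
  rw [hσ, Finset.mem_union, Finset.mem_union, mem_exSet, mem_exSet, mem_exSet, mem_exSet]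
  rintro ⟨⟨h1, h2⟩ | ⟨h1, h2⟩, ⟨h3, h4⟩ | ⟨h3, h4⟩⟩ <;> simp [*]

variable (i₁ i₂) in
def exPerms (M : Matrix (Fin n) (Fin n) Bool) : Finset (Perm (Fin n)) :=
  {σ | (exSet M i₁ i₂).image σ = exSet M i₂ i₁}

theorem exPerms_nonempty (hM : M ∈ regSet n d) : (exPerms i₁ i₂ M).Nonempty := by
  obtain ⟨σ, hσ⟩ := Perm.exists_image_eq (card_exSet_comm hM)
  exact ⟨σ, by simpa [exPerms] using hσ⟩

variable (i₁ i₂) in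
def shuffleKernel (M : Matrix (Fin n) (Fin n) Bool) : PMF (Matrix (Fin n) (Fin n) Bool) :=
  (uniformOn (exPerms i₁ i₂ M) (Equiv.refl (Fin n))).bind fun σ =>
    (PMF.uniformOfFintype (Fin n → Bool)).map fun ξ => shuffleAt M i₁ i₂ (exSet M i₁ i₂) σ ξ

variable (i₁ i₂) in
def shuffleFiber (M A : Matrix (Fin n) (Fin n) Bool) : Finset (Perm (Fin n) × (Fin n → Bool)) :=
  {p ∈ exPerms i₁ i₂ M ×ˢ univ | shuffleAt M i₁ i₂ (exSet M i₁ i₂) p.1 p.2 = A}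

theorem shuffleKernel_apply (hM : M ∈ regSet n d) (A : Matrix (Fin n) (Fin n) Bool) :
    shuffleKernel i₁ i₂ M A
      = #(shuffleFiber i₁ i₂ M A) / (#(exPerms i₁ i₂ M) * Fintype.card (Fin n → Bool)) := by
  rw [shuffleKernel, uniformOn, dif_pos (exPerms_nonempty hM),
    PMF.bind_uniformOfFinset_map_uniformOfFintype_apply]
  rfl

variable {p : Perm (Fin n) × (Fin n → Bool)}

theorem mem_shuffleFiber :
    p ∈ shuffleFiber i₁ i₂ M A ↔ (exSet M i₁ i₂).image p.1 = exSet M i₂ i₁ ∧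
      shuffleAt M i₁ i₂ (exSet M i₁ i₂) p.1 p.2 = A := by
  simp [shuffleFiber, exPerms]

variable (i₁ i₂) in
def switchBack (M : Matrix (Fin n) (Fin n) Bool) (p : Perm (Fin n) × (Fin n → Bool)) :
    Perm (Fin n) × (Fin n → Bool) :=
  let ρ := switchPerm (exSet M i₁ i₂) p.1 p.2
  (ρ * p.1 * ρ, p.2 ∘ ρ)

theorem switchPerm_switchBack (h12 : i₁ ≠ i₂) (hp : p ∈ shuffleFiber i₁ i₂ M A) :
    switchPerm (exSet A i₁ i₂) (switchBack i₁ i₂ M p).1 (switchBack i₁ i₂ M p).2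
      = switchPerm (exSet M i₁ i₂) p.1 p.2 := by
  obtain ⟨hσ, rfl⟩ := mem_shuffleFiber.1 hp
  rw [shuffleAt_eq_permuteTwoRows h12 hσ,
    exSet_permuteTwoRows switchPerm_involutive (.inl rfl) (.inr rfl)]
  exact switchPerm_switch

theorem switchBack_mem_shuffleFiber (h12 : i₁ ≠ i₂) (hp : p ∈ shuffleFiber i₁ i₂ M A) :
    switchBack i₁ i₂ M p ∈ shuffleFiber i₁ i₂ A M := by
  have hswitch := switchPerm_switchBack h12 hp
  obtain ⟨hσ, rfl⟩ := mem_shuffleFiber.1 hp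
  rw [shuffleAt_eq_permuteTwoRows h12 hσ] at hswitch ⊢
  simp only [switchBack] at hswitch ⊢
  set ρ := switchPerm (exSet M i₁ i₂) p.1 p.2
  have hρ : Function.Involutive ρ := switchPerm_involutive
  have hσA : (exSet (permuteTwoRows M i₁ i₂ ρ) i₁ i₂).image (ρ * p.1 * ρ)
      = exSet (permuteTwoRows M i₁ i₂ ρ) i₂ i₁ := by
    rw [exSet_permuteTwoRows hρ (.inl rfl) (.inr rfl),
      exSet_permuteTwoRows hρ (.inr rfl) (.inl rfl), ← hσ]
    simp [Finset.image_image, Function.comp_def, hρ _]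
  refine mem_shuffleFiber.2 ⟨hσA, ?_⟩
  rw [shuffleAt_eq_permuteTwoRows h12 hσA, hswitch, permuteTwoRows_permuteTwoRows _ _ _ hρ]

theorem switchBack_switchBack (h12 : i₁ ≠ i₂) (hp : p ∈ shuffleFiber i₁ i₂ M A) :
    switchBack i₁ i₂ A (switchBack i₁ i₂ M p) = p := by
  have hρ : Function.Involutive (switchPerm (exSet M i₁ i₂) p.1 p.2) := switchPerm_involutive
  rw [switchBack, switchPerm_switchBack h12 hp]
  ext x
  · simp [switchBack, hρ _]
  · simp [switchBack, hρ _]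

theorem card_shuffleFiber_comm (h12 : i₁ ≠ i₂) :
    #(shuffleFiber i₁ i₂ M A) = #(shuffleFiber i₁ i₂ A M) :=
  Finset.card_nbij' (switchBack i₁ i₂ M) (switchBack i₁ i₂ A)
    (fun _ hp => switchBack_mem_shuffleFiber h12 hp)
    (fun _ hp => switchBack_mem_shuffleFiber h12 hp)
    (fun _ hp => switchBack_switchBack h12 hp) (fun _ hp => switchBack_switchBack h12 hp)

theorem card_exPerms_eq_of_mem_shuffleFiber (h12 : i₁ ≠ i₂) (hp : p ∈ shuffleFiber i₁ i₂ M A) :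
    #(exPerms i₁ i₂ M) = #(exPerms i₁ i₂ A) := by
  obtain ⟨hσ, rfl⟩ := mem_shuffleFiber.1 hp
  have hρ : Function.Involutive (switchPerm (exSet M i₁ i₂) p.1 p.2) := switchPerm_involutive
  rw [shuffleAt_eq_permuteTwoRows h12 hσ, exPerms, exPerms,
    exSet_permuteTwoRows hρ (.inl rfl) (.inr rfl), exSet_permuteTwoRows hρ (.inr rfl) (.inl rfl)]
  exact Perm.card_image_eq_conj _ _ _

end Shuffle

theorem shuffling_coupling_general (n d : ℕ)
    (i₁ i₂ : Fin n) (h12 : i₁ ≠ i₂) (hreg : (regSet n d).Nonempty) :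
    ((PMF.uniformOfFinset (regSet n d) hreg).bind fun M =>
      (uniformOn (Finset.univ.filter fun σ : Equiv.Perm (Fin n) =>
          (exSet M i₁ i₂).image σ = exSet M i₂ i₁) (Equiv.refl (Fin n))).bind fun σ =>
        (PMF.uniformOfFintype (Fin n → Bool)).map fun ξ =>
          shuffleAt M i₁ i₂ (exSet M i₁ i₂) σ ξ)
    = PMF.uniformOfFinset (regSet n d) hreg := by
  refine PMF.bind_uniformOfFinset_eq_self_of_symm _ hreg (shuffleKernel i₁ i₂)
    (fun M hM A hA => ?_) (fun M hM A hA => ?_)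
  · have hempty : shuffleFiber i₁ i₂ M A = ∅ := Finset.eq_empty_of_forall_notMem fun p hp =>
      have ⟨hσ, hA'⟩ := mem_shuffleFiber.1 hp
      hA (hA' ▸ shuffleAt_mem_regSet h12 hM hσ p.2)
    simp [shuffleKernel_apply hM, hempty]
  · rw [shuffleKernel_apply hM, shuffleKernel_apply hA, card_shuffleFiber_comm h12]
    obtain hempty | ⟨p, hp⟩ := (shuffleFiber i₁ i₂ A M).eq_empty_or_nonempty
    · simp [hempty]
    · rw [card_exPerms_eq_of_mem_shuffleFiber h12 hp]

/-- **Shuffling coupling.**  Let `M` be uniform on `M_{n,d}` and `i₁ ≠ i₂`.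
Conditional on `M`, let `π : Ex_M(i₁,i₂) → Ex_M(i₂,i₁)` be a uniform random bijection
(encoded as a uniform random permutation `σ` of `[n]` mapping `Ex_M(i₁,i₂)` onto
`Ex_M(i₂,i₁)`), and let `ξ` be iid uniform signs independent of everything else.  Then
the shuffled matrix `M̃` is again uniform on `M_{n,d}`. -/
theorem shuffling_coupling (n d : ℕ) (hd : 1 ≤ d ∧ d ≤ n)
    (i₁ i₂ : Fin n) (h12 : i₁ ≠ i₂) (hreg : (regSet n d).Nonempty) :
    ((PMF.uniformOfFinset (regSet n d) hreg).bind fun M =>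
      (uniformOn (Finset.univ.filter fun σ : Equiv.Perm (Fin n) =>
          (exSet M i₁ i₂).image σ = exSet M i₂ i₁) (Equiv.refl (Fin n))).bind fun σ =>
        (PMF.uniformOfFintype (Fin n → Bool)).map fun ξ =>
          shuffleAt M i₁ i₂ (exSet M i₁ i₂) σ ξ)
    = PMF.uniformOfFinset (regSet n d) hreg :=
  shuffling_coupling_general n d i₁ i₂ h12 hreg

end
end

section
/- Let H be a random n×n real matrix with rows R₁,…,Rₙ. For η ∈ (0,1), let 𝒢_L(η) be the event that H has no nontrivial (1−η)n-sparse left null vectors. For i ∈ [n] let V_i = span(R_j : j ≠ i) and let 𝒮_i be the event {R_i ∈ V_i}. Let ℛ₁ = {corank(H) ≥ 1} (i.e. H is singular). Draw I uniformly from [n], independently of H. Then P(ℛ₁ ∧ 𝒢_L(η)) ≤ (1/(1−η)) · P(𝒮_I ∧ 𝒢_L(η)). -/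
open scoped Classical
open MeasureTheory
open scoped ENNReal

noncomputable section

private lemma row_mem_span_aux {n : ℕ} (M : Fin n → Fin n → ℝ) (y : Fin n → ℝ) (i : Fin n)
    (hyi : y i ≠ 0) (hy : Matrix.vecMul y (Matrix.of M) = 0) :
    M i ∈ Submodule.span ℝ (M '' {j : Fin n | j ≠ i}) := by
  have hsum : ∑ j, y j • M j = 0 := by
    funext k
    have := congrFun hy k
    simpa [Matrix.vecMul, dotProduct, Finset.sum_apply] using this
  have h : y i • M i = - ∑ j ∈ Finset.univ.erase i, y j • M j := by
    have h2 := Finset.add_sum_erase Finset.univ (fun j => y j • M j) (Finset.mem_univ i)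
    rw [hsum] at h2
    linear_combination (norm := module) h2
  have hmem : ∑ j ∈ Finset.univ.erase i, y j • M j ∈
      Submodule.span ℝ (M '' {j : Fin n | j ≠ i}) := by
    refine Submodule.sum_mem _ fun j hj => Submodule.smul_mem _ _ ?_
    exact Submodule.subset_span ⟨j, (Finset.mem_erase.mp hj).1, rfl⟩
  have hMi : M i = (y i)⁻¹ • (y i • M i) := by
    rw [smul_smul, inv_mul_cancel₀ hyi, one_smul]
  rw [hMi, h]
  exact Submodule.smul_mem _ _ (Submodule.neg_mem _ hmem)

/-- **Control of singularity by random row sampling.**  Let `H` be a random `n × n`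
real matrix (given by its rows `H ω i`) on a probability space `(Ω, μ)`, let `𝒢_L(η)`
be the event that `H` has no nontrivial `(1-η)n`-sparse left null vector, let `ℛ₁` be
the event that `H` is singular, and for `i ∈ [n]` let `𝒮_i` be the event that the
`i`-th row of `H` lies in the span of the other rows.  If `I` is drawn uniformly from
`[n]` independently of `H` (modelled by the product with the uniform measure on
`Fin n`), then `P(ℛ₁ ∧ 𝒢_L(η)) ≤ (1/(1-η)) P(𝒮_I ∧ 𝒢_L(η))`. -/
theorem corank_one_by_sampling
    {Ω : Type*} [MeasurableSpace Ω] (μ : Measure Ω) [IsProbabilityMeasure μ]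
    (n : ℕ) [NeZero n]
    (H : Ω → Fin n → Fin n → ℝ) (hH : Measurable H)
    (η : ℝ) (hη : 0 < η ∧ η < 1) :
    μ {ω : Ω | (Matrix.of (H ω)).det = 0 ∧
        ¬∃ y : Fin n → ℝ, y ≠ 0 ∧
          ((Finset.univ.filter fun i => y i ≠ 0).card : ℝ) ≤ (1 - η) * n ∧
          Matrix.vecMul y (Matrix.of (H ω)) = 0} ≤
      ENNReal.ofReal (1 / (1 - η)) *
        (μ.prod (PMF.uniformOfFintype (Fin n)).toMeasure)
          {p : Ω × Fin n |
            (H p.1 p.2 ∈ Submodule.span ℝ (H p.1 '' {j : Fin n | j ≠ p.2})) ∧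
            ¬∃ y : Fin n → ℝ, y ≠ 0 ∧
              ((Finset.univ.filter fun i => y i ≠ 0).card : ℝ) ≤ (1 - η) * n ∧
              Matrix.vecMul y (Matrix.of (H p.1)) = 0} := by
  obtain ⟨hη0, hη1⟩ := hη
  have h1η : (0:ℝ) < 1 - η := by linarith
  set ν := (PMF.uniformOfFintype (Fin n)).toMeasure with hνdef
  set A : Set Ω := {ω : Ω | (Matrix.of (H ω)).det = 0 ∧
        ¬∃ y : Fin n → ℝ, y ≠ 0 ∧
          ((Finset.univ.filter fun i => y i ≠ 0).card : ℝ) ≤ (1 - η) * n ∧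
          Matrix.vecMul y (Matrix.of (H ω)) = 0} with hAdef
  set T : Set (Ω × Fin n) := {p : Ω × Fin n |
            (H p.1 p.2 ∈ Submodule.span ℝ (H p.1 '' {j : Fin n | j ≠ p.2})) ∧
            ¬∃ y : Fin n → ℝ, y ≠ 0 ∧
              ((Finset.univ.filter fun i => y i ≠ 0).card : ℝ) ≤ (1 - η) * n ∧
              Matrix.vecMul y (Matrix.of (H p.1)) = 0} with hTdef
  set T' := toMeasurable (μ.prod ν) T with hT'def
  have hT'meas : MeasurableSet T' := measurableSet_toMeasurable _ _
  have hTT' : T ⊆ T' := subset_toMeasurable _ _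
  set f : Ω → ℝ≥0∞ := fun ω => ν (Prod.mk ω ⁻¹' T') with hfdef
  have hprod : (μ.prod ν) T = ∫⁻ ω, f ω ∂μ := by
    rw [← measure_toMeasurable T, Measure.prod_apply hT'meas]
  have hfmeas : Measurable f := measurable_measure_prodMk_left hT'meas
  -- the key pointwise bound
  have key : ∀ ω ∈ A, ENNReal.ofReal (1 - η) ≤ f ω := by
    intro ω hω
    obtain ⟨hdet, hG⟩ := hω
    obtain ⟨y, hy0, hyM⟩ := (Matrix.exists_vecMul_eq_zero_iff).mpr hdet
    set s : Finset (Fin n) := Finset.univ.filter fun i => y i ≠ 0 with hsdef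
    have hcard : (1 - η) * n < (s.card : ℝ) := by
      by_contra hc
      exact hG ⟨y, hy0, le_of_not_gt hc, hyM⟩
    have hsub : (↑s : Set (Fin n)) ⊆ Prod.mk ω ⁻¹' T' := by
      intro i hi
      have hyi : y i ≠ 0 := by simpa [hsdef] using hi
      exact hTT' ⟨row_mem_span_aux (H ω) y i hyi hyM, hG⟩
    have hν_s : ν (↑s : Set (Fin n)) = (s.card : ℝ≥0∞) * (n : ℝ≥0∞)⁻¹ := by
      rw [hνdef, PMF.toMeasure_apply_finset]
      simp [PMF.uniformOfFintype_apply, Finset.sum_const, nsmul_eq_mul]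
    have hle : ENNReal.ofReal (1 - η) ≤ ν (↑s : Set (Fin n)) := by
      rw [hν_s, ← div_eq_mul_inv]
      rw [ENNReal.le_div_iff_mul_le (Or.inl (by exact_mod_cast (NeZero.ne n)))
        (Or.inl (ENNReal.natCast_ne_top n))]
      calc ENNReal.ofReal (1 - η) * (n : ℝ≥0∞)
          = ENNReal.ofReal ((1 - η) * n) := by
            rw [ENNReal.ofReal_mul h1η.le, ENNReal.ofReal_natCast]
        _ ≤ ENNReal.ofReal (s.card : ℝ) := ENNReal.ofReal_le_ofReal hcard.le
        _ = (s.card : ℝ≥0∞) := ENNReal.ofReal_natCast _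
    exact hle.trans (measure_mono hsub)
  have hmono : μ A ≤ μ {ω | ENNReal.ofReal (1 - η) ≤ f ω} :=
    measure_mono fun ω hω => key ω hω
  have markov : ENNReal.ofReal (1 - η) * μ {ω | ENNReal.ofReal (1 - η) ≤ f ω}
      ≤ ∫⁻ ω, f ω ∂μ := mul_meas_ge_le_lintegral hfmeas _
  calc μ A = ENNReal.ofReal (1 / (1 - η)) * (ENNReal.ofReal (1 - η) * μ A) := by
        rw [← mul_assoc, ← ENNReal.ofReal_mul (by positivity), one_div,
          inv_mul_cancel₀ h1η.ne', ENNReal.ofReal_one, one_mul]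
    _ ≤ ENNReal.ofReal (1 / (1 - η)) * ((μ.prod ν) T) := by
        gcongr
        calc ENNReal.ofReal (1 - η) * μ A
            ≤ ENNReal.ofReal (1 - η) * μ {ω | ENNReal.ofReal (1 - η) ≤ f ω} := by gcongr
          _ ≤ ∫⁻ ω, f ω ∂μ := markov
          _ = (μ.prod ν) T := hprod.symm

end
end

section
/- Let M be a random n×n real matrix with rows R₁,…,Rₙ. For η ∈ (0,1), let 𝒢_L(η) be the event that M has no nontrivial (1−η)n-sparse left null vectors. For k ∈ [n] let ℛ_k = {corank(M) ≥ k}. For a tuple (i₁,…,i_k) ∈ [n]^k of distinct indices, let V_{(i₁,…,i_k)} = span(R_i : i ∉ {i₁,…,i_k}) and let 𝒮_{(i₁,…,i_k)} be the event that R_{i₁},…,R_{i_k} all lie in V_{(i₁,…,i_k)}. Let k ∈ [n/2], and let 𝕀 = (I₁,…,I_k) be sampled uniformly without replacement from [n], independently of M. Then for every η ∈ (0, 1/(2k)), P(ℛ_k ∧ 𝒢_L(η)) ≤ (1/(1−2ηk)) · P(𝒮_𝕀 ∧ 𝒢_L(η)). -/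
/-!
Fix `ω` in the event on the left and let `W` be the left null space of `M ω`: then
`dim W ≥ k`, and every nonzero `y ∈ W` vanishes at fewer than `ηn` coordinates. Call slot `l`
of a tuple `f` bad if every `y ∈ W` vanishing at `f 0, …, f (l-1)` also vanishes at `f l`.
Since `l < dim W`, some nonzero `y ∈ W` vanishes at `f 0, …, f (l-1)`, so at most `ηn`
coordinates are bad for slot `l`; as slot `l` of an injective tuple takes at least
`n - k + 1 ≥ n/2` values once the other slots are fixed, slot `l` is bad for at most a `2η`
fraction of the tuples. If no slot is bad, witnesses `y_l` give an invertible triangular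
matrix `(y_l (f l'))`, so combinations of them yield `z ∈ W` with `z ∘ f` any unit vector,
which puts each row `R_{f m}` in the span of the rows outside `f`. So for every such `ω` at
least a `1 - 2ηk` fraction of the tuples succeed, and Markov's inequality on the `ω`-sections
of the product measure finishes the proof.
-/

open scoped Classical
open MeasureTheory

noncomputable section

open Finset Function

theorem measurableSet_setOf_mem_range {α E F : Type*} [TopologicalSpace α] [MeasurableSpace α]
    [OpensMeasurableSpace α] [NormedAddCommGroup E] [NormedSpace ℝ E] [FiniteDimensional ℝ E]
    [NormedAddCommGroup F] [NormedSpace ℝ F] {L : α → E →ₗ[ℝ] F}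
    (hL : ∀ c, Continuous fun a => L a c) {v : α → F} (hv : Continuous v) :
    MeasurableSet {a | v a ∈ LinearMap.range (L a)} := by
  set d := TopologicalSpace.denseSeq E
  have hrange (a : α) :
      (LinearMap.range (L a) : Set F) = closure (Set.range fun j => L a (d j)) := by
    refine subset_antisymm ?_ (closure_minimal ?_ (Submodule.closed_of_finiteDimensional _))
    · change Set.range (L a) ⊆ closure (Set.range (L a ∘ d))
      rw [Set.range_comp]
      exact (L a).continuous_of_finiteDimensional.range_subset_closure_image_dense
        (TopologicalSpace.denseRange_denseSeq E)
    · exact Set.range_subset_iff.2 fun j => LinearMap.mem_range_self _ _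
  have hset : {a | v a ∈ LinearMap.range (L a)} =
      ⋂ m : ℕ, ⋃ j : ℕ, {a | dist (v a) (L a (d j)) < 1 / (m + 1)} := by
    ext a
    simp only [Set.mem_ofPred_eq, ← SetLike.mem_coe, hrange, Metric.mem_closure_range_iff_nat,
      Set.mem_iInter, Set.mem_iUnion]
  rw [hset]
  exact .iInter fun m => .iUnion fun j =>
    (isOpen_lt (hv.dist (hL _)) continuous_const).measurableSet

theorem measurableSet_setOf_mem_span_image {ι F : Type*} [Fintype ι] [NormedAddCommGroup F]
    [NormedSpace ℝ F] [MeasurableSpace F] [BorelSpace F] [SecondCountableTopology F]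
    (T : Set ι) (j : ι) :
    MeasurableSet {X : ι → F | X j ∈ Submodule.span ℝ (X '' T)} := by
  simp only [Set.image_eq_range, ← Fintype.range_linearCombination]
  exact measurableSet_setOf_mem_range
    (fun c => by simpa [Fintype.linearCombination_apply] using by fun_prop) (continuous_apply j)

theorem exists_sparse_relation_iff {ι R V : Type*} [Fintype ι] [Ring R] [AddCommGroup V]
    [Module R V] (X : ι → V) (c : ℝ) :
    (∃ y : ι → R, y ≠ 0 ∧ (#{i | y i ≠ 0} : ℝ) ≤ c ∧ ∑ i, y i • X i = 0) ↔
      ∃ t : Finset ι, (#t : ℝ) ≤ c ∧ ¬LinearIndependent R (fun i : t => X i) := by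
  simp_rw [Fintype.not_linearIndependent_iff]
  constructor
  · rintro ⟨y, hy0, hcard, hsum⟩
    obtain ⟨i, hi⟩ := Function.ne_iff.1 hy0
    refine ⟨({i | y i ≠ 0} : Finset ι), hcard, fun i => y i, ?_, ⟨⟨i, by simpa using hi⟩, hi⟩⟩
    rw [Finset.sum_coe_sort _ (fun i => y i • X i), ← hsum]
    exact Finset.sum_filter_of_ne fun i _ h hi => h (by simp [hi])
  · rintro ⟨t, hcard, g, hsum, i, hi⟩
    set y : ι → R := fun j => if h : j ∈ t then g ⟨j, h⟩ else 0
    refine ⟨y, Function.ne_iff.2 ⟨i, by simpa [y] using hi⟩, ?_, ?_⟩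
    · have hsub : ({j | y j ≠ 0} : Finset ι) ⊆ t := fun j hj => by
        by_contra hjt
        simp [y, hjt] at hj
      exact le_trans (by exact_mod_cast card_le_card hsub) hcard
    · rw [← hsum, ← sum_subset (subset_univ t) fun j _ hj => by simp [y, hj],
        ← sum_coe_sort t]
      simp [y]

theorem isClosed_setOf_exists_sparse_relation {ι 𝕜 V : Type*} [Fintype ι]
    [NontriviallyNormedField 𝕜] [CompleteSpace 𝕜] [NormedAddCommGroup V] [NormedSpace 𝕜 V]
    (c : ℝ) :
    IsClosed {X : ι → V | ∃ y : ι → 𝕜, y ≠ 0 ∧ (#{i | y i ≠ 0} : ℝ) ≤ c ∧ ∑ i, y i • X i = 0} := by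
  simp_rw [exists_sparse_relation_iff, Set.ofPred_exists]
  refine isClosed_iUnion_of_finite fun t => ?_
  by_cases ht : (#t : ℝ) ≤ c
  · simp only [ht, true_and]
    exact (isOpen_setOfPred_linearIndependent.preimage (by fun_prop)).isClosed_compl
  · simp [ht]

section NullSpace

variable {ι K V : Type*} [Fintype ι] [Field K] [AddCommGroup V] [Module K V]

theorem mem_span_image_of_sum_smul_eq_zero {X : ι → V} {y : ι → K} (hy : ∑ i, y i • X i = 0)
    {j : ι} (hj : y j ≠ 0) {T : Set ι} (hT : ∀ i, i ≠ j → y i ≠ 0 → i ∈ T) :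
    X j ∈ Submodule.span K (X '' T) := by
  rw [← add_sum_erase _ _ (mem_univ j)] at hy
  have hXj : X j = -(y j)⁻¹ • ∑ i ∈ univ.erase j, y i • X i := by
    rw [eq_neg_of_add_eq_zero_right hy, neg_smul_neg, smul_smul, inv_mul_cancel₀ hj, one_smul]
  rw [hXj]
  refine Submodule.smul_mem _ _ (Submodule.sum_mem _ fun i hi => ?_)
  by_cases hyi : y i = 0
  · simp [hyi]
  · exact Submodule.smul_mem _ _
      (Submodule.subset_span (Set.mem_image_of_mem X (hT i (ne_of_mem_erase hi) hyi)))

theorem Matrix.rank_add_finrank_ker_linearCombination {ι' : Type*} [Fintype ι'] (X : ι → ι' → K) :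
    (Matrix.of X).rank + Module.finrank K (LinearMap.ker (Fintype.linearCombination K X)) =
      Fintype.card ι := by
  rw [Matrix.rank_eq_finrank_span_row, ← Module.finrank_fintype_fun_eq_card (R := K),
    ← LinearMap.finrank_range_add_finrank_ker (Fintype.linearCombination K X),
    Fintype.range_linearCombination]
  rfl

def forcedZeros (W : Submodule K (ι → K)) (S : Finset ι) : Finset ι :=
  {v | ∀ y ∈ W, (∀ i ∈ S, y i = 0) → y v = 0}

variable {W : Submodule K (ι → K)}

theorem exists_mem_ne_zero_forall_eq_zero {S : Finset ι} (hS : #S < Module.finrank K W) :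
    ∃ y ∈ W, y ≠ 0 ∧ ∀ i ∈ S, y i = 0 := by
  let restrict : W →ₗ[K] (S → K) :=
    (LinearMap.pi fun i : S => LinearMap.proj (R := K) (φ := fun _ : ι => K) i.1).comp W.subtype
  have hker : LinearMap.ker restrict ≠ ⊥ :=
    LinearMap.ker_ne_bot_of_finrank_lt (by simpa using hS)
  obtain ⟨y, hy, hy0⟩ := Submodule.exists_mem_ne_zero_of_ne_bot hker
  refine ⟨y, y.2, by simpa using hy0, fun i hi => ?_⟩
  simpa [restrict] using congrFun (LinearMap.mem_ker.1 hy) ⟨i, hi⟩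

theorem card_forcedZeros_le {S : Finset ι} (hS : #S < Module.finrank K W) {b : ℕ}
    (hb : ∀ y ∈ W, y ≠ 0 → #{i | y i = 0} ≤ b) : #(forcedZeros W S) ≤ b := by
  obtain ⟨y, hyW, hy0, hyS⟩ := exists_mem_ne_zero_forall_eq_zero hS
  refine le_trans (card_le_card fun v hv => ?_) (hb y hyW hy0)
  simp only [forcedZeros, mem_filter, mem_univ, true_and] at hv ⊢
  exact hv y hyW hyS

theorem exists_mem_comp_eq_single [DecidableEq ι] {k : ℕ} {f : Fin k → ι}
    (hf : ∀ l, f l ∉ forcedZeros W ((Iio l).image f)) (m : Fin k) :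
    ∃ z ∈ W, z ∘ f = Pi.single m 1 := by
  have hy (l : Fin k) : ∃ y ∈ W, (∀ l' < l, y (f l') = 0) ∧ y (f l) ≠ 0 := by
    simpa [forcedZeros] using hf l
  choose y hyW hy0 hyl using hy
  set B : Matrix (Fin k) (Fin k) K := .of fun l l' => y l (f l')
  have hB : IsUnit B.det := by
    rw [Matrix.det_of_isUpperTriangular (M := B) fun l l' h => hy0 l l' h]
    exact isUnit_iff_ne_zero.2 (prod_ne_zero_iff.2 fun l _ => hyl l)
  refine ⟨∑ l, B⁻¹ m l • y l, sum_mem fun l _ => W.smul_mem _ (hyW l), funext fun j => ?_⟩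
  have := congrFun (congrFun (Matrix.nonsing_inv_mul B hB) m) j
  simpa [B, Matrix.mul_apply, Matrix.one_apply, Pi.single_apply, eq_comm] using this

end NullSpace

theorem Function.Injective.update_of_forall_ne {α β : Type*} [DecidableEq α] {f : α → β}
    (hf : Injective f) {a : α} {b : β} (hb : ∀ x ≠ a, f x ≠ b) : Injective (update f a b) := by
  intro x y hxy
  by_cases hx : x = a <;> by_cases hy : y = a <;>
    simp_all [update_of_ne, hf.eq_iff, eq_comm (a := b)]

/-- Double counting: once the other slots of an injective tuple are fixed, slot `l` can take at
least `card ι + 1 - k` values, and at most `b` of them lie in `P f`. -/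
theorem card_injective_apply_mem_mul_le {ι : Type*} [Fintype ι] [DecidableEq ι] {k : ℕ}
    (l : Fin k) (P : (Fin k → ι) → Finset ι) (hP : ∀ f v, P (update f l v) = P f) {b : ℕ}
    (hb : ∀ f, #(P f) ≤ b) :
    #{f : Fin k → ι | Injective f ∧ f l ∈ P f} * (Fintype.card ι + 1 - k) ≤
      #{f : Fin k → ι | Injective f} * b := by
  refine card_mul_le_card_mul (fun f g => ∀ j ≠ l, f j = g j) (fun f hf => ?_) (fun g _ => ?_)
  · simp only [mem_filter, mem_univ, true_and] at hf
    have hfree : Fintype.card ι + 1 - k ≤ #(univ \ (univ.erase l).image f) := by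
      have := card_image_le (s := univ.erase l) (f := f)
      rw [card_erase_of_mem (mem_univ l), card_univ, Fintype.card_fin] at this
      rw [card_sdiff_of_subset (subset_univ _), card_univ]
      have := l.pos
      omega
    refine hfree.trans (card_le_card_of_injOn (update f l) (fun v hv => ?_)
      (update_injective f l).injOn)
    simp only [coe_sdiff, coe_univ, coe_image, coe_erase, Set.mem_sdiff, Set.mem_univ,
      Set.mem_image, not_exists, not_and, true_and] at hv
    simp only [mem_coe, bipartiteAbove, mem_filter, mem_univ, true_and]
    exact ⟨hf.1.update_of_forall_ne hv,
      fun j hj => (update_of_ne hj v f).symm⟩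
  · refine le_trans (card_le_card_of_injOn (· l) (fun f hf => ?_) fun f hf f' hf' h => ?_) (hb g)
    all_goals simp only [mem_coe, bipartiteBelow, mem_filter, mem_univ, true_and] at hf ⊢
    · have hfg : f = update g l (f l) := by
        funext j
        by_cases hj : j = l
        · subst hj; simp
        · simp [hj, hf.2 j hj]
      rw [← hP g (f l), ← hfg]
      exact hf.1.2
    · simp only [mem_coe, bipartiteBelow, mem_filter, mem_univ, true_and] at hf'
      funext j
      by_cases hj : j = l
      · subst hj; exact h
      · rw [hf.2 j hj, hf'.2 j hj]

section GoodTuples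

variable {ι V : Type*} (K : Type*) [Fintype ι] [Field K] [AddCommGroup V] [Module K V]

def InSpanOfRest (X : ι → V) {k : ℕ} (f : Fin k → ι) : Prop :=
  ∀ m, X (f m) ∈ Submodule.span K (X '' {i | ∀ l, i ≠ f l})

variable {K}

theorem inSpanOfRest_of_exists_mem_ker {X : ι → V} {k : ℕ} {f : Fin k → ι}
    (h : ∀ m, ∃ z ∈ LinearMap.ker (Fintype.linearCombination K X), z ∘ f = Pi.single m 1) :
    InSpanOfRest K X f := by
  intro m
  obtain ⟨z, hz, hzf⟩ := h m
  have hzf' (l : Fin k) : z (f l) = (Pi.single m 1 : Fin k → K) l := congrFun hzf l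
  refine mem_span_image_of_sum_smul_eq_zero (by simpa [Fintype.linearCombination_apply] using hz)
    (by simp [hzf']) fun i hi hzi l hil => ?_
  subst hil
  have hlm : l ≠ m := fun h => hi (h ▸ rfl)
  simp [hzf', hlm] at hzi

theorem card_injective_mul_le_card_inSpanOfRest_mul_add [DecidableEq ι] {X : ι → V} {k b : ℕ}
    (hk : k ≤ Module.finrank K (LinearMap.ker (Fintype.linearCombination K X)))
    (hb : ∀ y ∈ LinearMap.ker (Fintype.linearCombination K X), y ≠ 0 → #{i | y i = 0} ≤ b) :
    #{f : Fin k → ι | Injective f} * (Fintype.card ι + 1 - k) ≤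
      #{f : Fin k → ι | Injective f ∧ InSpanOfRest K X f} * (Fintype.card ι + 1 - k) +
        k * (#{f : Fin k → ι | Injective f} * b) := by
  set W := LinearMap.ker (Fintype.linearCombination K X)
  set N := Fintype.card ι + 1 - k
  set bad : Fin k → Finset (Fin k → ι) :=
    fun l => {f | Injective f ∧ f l ∈ forcedZeros W ((Iio l).image f)}
  have hcover : #{f : Fin k → ι | Injective f} ≤
      #{f : Fin k → ι | Injective f ∧ InSpanOfRest K X f} + ∑ l, #(bad l) := by
    refine (card_le_card fun f hf => ?_).trans
      ((card_union_le _ _).trans (Nat.add_le_add_left card_biUnion_le _))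
    simp only [mem_filter, mem_univ, true_and] at hf
    by_cases h : ∃ l, f l ∈ forcedZeros W ((Iio l).image f)
    · obtain ⟨l, hl⟩ := h
      exact mem_union_right _ (mem_biUnion.2 ⟨l, mem_univ l, by simp [bad, hf, hl]⟩)
    · exact mem_union_left _ (mem_filter.2 ⟨mem_univ f, hf,
        inSpanOfRest_of_exists_mem_ker (exists_mem_comp_eq_single (not_exists.1 h))⟩)
  have hbad (l : Fin k) : #(bad l) * N ≤ #{f : Fin k → ι | Injective f} * b := by
    refine card_injective_apply_mem_mul_le l (fun f => forcedZeros W ((Iio l).image f))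
      (fun f v => ?_) fun f => card_forcedZeros_le ?_ hb
    · rw [image_congr fun j hj => update_of_ne (ne_of_lt (mem_Iio.1 hj)) v f]
    · calc #((Iio l).image f) ≤ #(Iio l) := card_image_le
        _ < k := by simp
        _ ≤ _ := hk
  calc #{f : Fin k → ι | Injective f} * N ≤
        (#{f : Fin k → ι | Injective f ∧ InSpanOfRest K X f} + ∑ l, #(bad l)) * N :=
        Nat.mul_le_mul_right _ hcover
    _ = _ + ∑ l, #(bad l) * N := by rw [add_mul, sum_mul]
    _ ≤ _ + ∑ _l : Fin k, #{f : Fin k → ι | Injective f} * b :=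
        Nat.add_le_add_left (sum_le_sum fun l _ => hbad l) _
    _ = _ := by simp

end GoodTuples

theorem one_sub_mul_card_injective_le_card_inSpanOfRest {n k : ℕ} (hk : k ≤ n / 2) {η : ℝ}
    (hη : 0 < η) {X : Fin n → Fin n → ℝ} (hrank : (Matrix.of X).rank + k ≤ n)
    (hsparse : ¬∃ y : Fin n → ℝ, y ≠ 0 ∧ (#{i | y i ≠ 0} : ℝ) ≤ (1 - η) * n ∧
      ∑ i, y i • X i = 0) :
    (1 - 2 * η * k) * #{f : Fin k → Fin n | Injective f} ≤
      #{f : Fin k → Fin n | Injective f ∧ InSpanOfRest ℝ X f} := by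
  have hker : k ≤ Module.finrank ℝ (LinearMap.ker (Fintype.linearCombination ℝ X)) := by
    have := Matrix.rank_add_finrank_ker_linearCombination X
    rw [Fintype.card_fin] at this
    omega
  have hzeros : ∀ y ∈ LinearMap.ker (Fintype.linearCombination ℝ X), y ≠ 0 →
      #{i | y i = 0} ≤ ⌊η * n⌋₊ := by
    intro y hy hy0
    rw [LinearMap.mem_ker, Fintype.linearCombination_apply] at hy
    have hsupp : (1 - η) * n < #{i | y i ≠ 0} := not_le.1 fun h => hsparse ⟨y, hy0, h, hy⟩
    have hsplit : (#{i | y i = 0} : ℝ) + #{i | y i ≠ 0} = n := by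
      exact_mod_cast (card_filter_add_card_filter_not (s := univ) fun i => y i = 0).trans
        (card_fin n)
    refine Nat.le_floor ?_
    linarith
  have hcount := card_injective_mul_le_card_inSpanOfRest_mul_add hker hzeros
  rw [Fintype.card_fin] at hcount
  set s := #{f : Fin k → Fin n | Injective f}
  set N := n + 1 - k
  have hcount' : (s : ℝ) * N ≤
      #{f : Fin k → Fin n | Injective f ∧ InSpanOfRest ℝ X f} * N + k * (s * ⌊η * n⌋₊) := by
    exact_mod_cast hcount
  have hNpos : 0 < N := by omega
  have hb : (⌊η * n⌋₊ : ℝ) ≤ 2 * η * N := by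
    have : n ≤ 2 * N := by omega
    have : (n : ℝ) ≤ 2 * N := by exact_mod_cast this
    exact (Nat.floor_le (by positivity)).trans (by nlinarith)
  have hks : (0 : ℝ) ≤ k * s := by positivity
  refine le_of_mul_le_mul_right ?_ (Nat.cast_pos.2 hNpos : (0 : ℝ) < N)
  nlinarith [mul_le_mul_of_nonneg_left hb hks]

theorem mul_measure_le_prod_apply {Ω β : Type*} [MeasurableSpace Ω] [MeasurableSpace β]
    (μ : Measure Ω) {ν : Measure β} [SFinite ν] {S : Set (Ω × β)} (hS : MeasurableSet S)
    {A : Set Ω} {c : ENNReal} (hA : ∀ ω ∈ A, c ≤ ν (Prod.mk ω ⁻¹' S)) :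
    c * μ A ≤ μ.prod ν S := by
  rw [Measure.prod_apply hS]
  calc c * μ A ≤ c * μ {ω | c ≤ ν (Prod.mk ω ⁻¹' S)} := by gcongr; exact hA
    _ ≤ _ := mul_meas_ge_le_lintegral₀ (measurable_measure_prodMk_left hS).aemeasurable c

theorem corank_k_by_sampling_general
    {Ω : Type*} [MeasurableSpace Ω] (μ : Measure Ω)
    (n k : ℕ) (hk : 1 ≤ k ∧ k ≤ n / 2)
    (M : Ω → Fin n → Fin n → ℝ) (hM : Measurable M)
    (hinj : (Finset.univ.filter fun f : Fin k → Fin n => Function.Injective f).Nonempty)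
    (η : ℝ) (hη : 0 < η ∧ η < 1 / (2 * k)) :
    μ {ω : Ω | (Matrix.of (M ω)).rank + k ≤ n ∧
        ¬∃ y : Fin n → ℝ, y ≠ 0 ∧
          ((Finset.univ.filter fun i => y i ≠ 0).card : ℝ) ≤ (1 - η) * n ∧
          Matrix.vecMul y (Matrix.of (M ω)) = 0} ≤
      ENNReal.ofReal (1 / (1 - 2 * η * k)) *
        (μ.prod (PMF.uniformOfFinset
            (Finset.univ.filter fun f : Fin k → Fin n => Function.Injective f)
            hinj).toMeasure)
          {p : Ω × (Fin k → Fin n) |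
            (∀ l : Fin k, M p.1 (p.2 l) ∈
              Submodule.span ℝ (M p.1 '' {i : Fin n | ∀ l : Fin k, i ≠ p.2 l})) ∧
            ¬∃ y : Fin n → ℝ, y ≠ 0 ∧
              ((Finset.univ.filter fun i => y i ≠ 0).card : ℝ) ≤ (1 - η) * n ∧
              Matrix.vecMul y (Matrix.of (M p.1)) = 0} := by
  have hpos : 0 < 1 - 2 * η * k := by
    have := (lt_div_iff₀ (by exact_mod_cast Nat.mul_pos two_pos hk.1 : (0 : ℝ) < 2 * k)).1 hη.2
    linarith
  have hvecMul (y : Fin n → ℝ) (X : Fin n → Fin n → ℝ) :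
      Matrix.vecMul y (Matrix.of X) = ∑ i, y i • X i := Matrix.vecMul_eq_sum y _
  simp only [hvecMul]
  rw [one_div, ENNReal.ofReal_inv_of_pos hpos, ← ENNReal.mul_le_iff_le_inv
    (ENNReal.ofReal_pos.2 hpos).ne' ENNReal.ofReal_ne_top]
  refine mul_measure_le_prod_apply μ ?_ fun ω hω => ?_
  · refine measurableSet_setOfPred.2 (measurable_from_prod_countable_left fun g => ?_)
    exact (Measurable.forall fun l => measurableSet_setOfPred.1
      (hM (measurableSet_setOf_mem_span_image {i | ∀ l, i ≠ g l} (g l)))).and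
        (measurableSet_setOfPred.1 (hM (isClosed_setOf_exists_sparse_relation (𝕜 := ℝ)
          ((1 - η) * n)).measurableSet)).not
  · rw [PMF.toMeasure_uniformOfFinset_apply _ _ (Set.to_countable _).measurableSet,
      ENNReal.le_div_iff_mul_le (by simp [hinj.ne_empty]) (by simp), ← ENNReal.ofReal_natCast,
      ← ENNReal.ofReal_mul hpos.le, ← ENNReal.ofReal_natCast]
    refine ENNReal.ofReal_le_ofReal
      ((one_sub_mul_card_injective_le_card_inSpanOfRest hk.2 hη.1 hω.1 hω.2).trans ?_)
    refine Nat.cast_le.2 (card_le_card fun f hf => ?_)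
    simp only [mem_filter, mem_univ, true_and] at hf ⊢
    exact ⟨hf.1, hf.2, hω.2⟩

/-- **Control of corank `k` by random row sampling.**  Let `M` be a random `n × n` real
matrix (given by its rows `M ω i`) on a probability space `(Ω, μ)`, let `𝒢_L(η)` be the
event that `M` has no nontrivial `(1-η)n`-sparse left null vector, and let `ℛ_k` be the
event that `corank(M) ≥ k`.  For a tuple `𝕀 = (I₁,…,I_k)` sampled uniformly without
replacement from `[n]` (a uniform random injective map `Fin k → Fin n`), independently
of `M`, let `𝒮_𝕀` be the event that the rows `R_{I₁},…,R_{I_k}` all lie in the span of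
the remaining rows.  Then for `k ∈ [n/2]` and `η ∈ (0, 1/(2k))`,
`P(ℛ_k ∧ 𝒢_L(η)) ≤ (1/(1-2ηk)) P(𝒮_𝕀 ∧ 𝒢_L(η))`. -/
theorem corank_k_by_sampling
    {Ω : Type*} [MeasurableSpace Ω] (μ : Measure Ω) [IsProbabilityMeasure μ]
    (n k : ℕ) (hk : 1 ≤ k ∧ k ≤ n / 2)
    (M : Ω → Fin n → Fin n → ℝ) (hM : Measurable M)
    (hinj : (Finset.univ.filter fun f : Fin k → Fin n => Function.Injective f).Nonempty)
    (η : ℝ) (hη : 0 < η ∧ η < 1 / (2 * k)) :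
    μ {ω : Ω | (Matrix.of (M ω)).rank + k ≤ n ∧
        ¬∃ y : Fin n → ℝ, y ≠ 0 ∧
          ((Finset.univ.filter fun i => y i ≠ 0).card : ℝ) ≤ (1 - η) * n ∧
          Matrix.vecMul y (Matrix.of (M ω)) = 0} ≤
      ENNReal.ofReal (1 / (1 - 2 * η * k)) *
        (μ.prod (PMF.uniformOfFinset
            (Finset.univ.filter fun f : Fin k → Fin n => Function.Injective f)
            hinj).toMeasure)
          {p : Ω × (Fin k → Fin n) |
            (∀ l : Fin k, M p.1 (p.2 l) ∈
              Submodule.span ℝ (M p.1 '' {i : Fin n | ∀ l : Fin k, i ≠ p.2 l})) ∧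
            ¬∃ y : Fin n → ℝ, y ≠ 0 ∧
              ((Finset.univ.filter fun i => y i ≠ 0).card : ℝ) ≤ (1 - η) * n ∧
              Matrix.vecMul y (Matrix.of (M p.1)) = 0} :=
  corank_k_by_sampling_general μ n k hk M hM hinj η hη

end
end

section
/- Let M be a uniform random element of M_{n,d}, fix distinct i₁, i₂ ∈ [n], and let (M, M̃, π, ξ) be the shuffling coupling at rows (i₁,i₂): conditional on M, π : Ex_M(i₁,i₂) → Ex_M(i₂,i₁) is a uniform random bijection; ξ : [n] → {±1} are iid uniform signs independent of everything else; and M̃ is obtained from M by replacing, for each j ∈ Ex_M(i₁,i₂), the 2×2 minor with rows (i₁,i₂) and columns (j, π(j)) by I if ξ(j) = +1 and by J = [[0,1],[1,0]] if ξ(j) = −1. Let u ∈ ℝⁿ be deterministic or random depending only on the rows (R_i : i ∉ {i₁,i₂}) of M, and define Steps(u) = {j ∈ Ex_M(i₁,i₂) : u(j) ≠ u(π(j))}. Then, conditional on M, π, and u, the probability over ξ that the i₁-th row R̃_{i₁} of M̃ satisfies R̃_{i₁}·u = 0 is O(|Steps(u)|^{−1/2}). -/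
/-!
Fix `M` and `π`. Outside the columns `j, π j` (`j ∈ Ex_M(i₁,i₂)`) the row `R̃_{i₁}` agrees with
`R_{i₁}`, and on the pair `j, π j` it carries `u j` or `u (π j)` according to `ξ j`. Hence
`R̃_{i₁} · u = D + ∑_{j ∈ Steps(u), ξ j = +1} (u j - u (π j))` for a constant `D`: a subset sum of
the nonzero weights `u j - u (π j)` over a uniformly random subset of `Steps(u)`. By the
Erdős–Littlewood–Offord bound (flip the negative weights, then the subsets hitting a fixed value
form an antichain, so Sperner's theorem applies) such a sum takes any value with probability at most
`choose k (k / 2) / 2 ^ k ≤ 1 / √k`, where `k = |Steps(u)|`.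
-/

open scoped Classical

noncomputable section

open Finset
open scoped symmDiff

namespace Nat

lemma two_mul_add_one_mul_centralBinom_sq_le (m : ℕ) :
    (2 * m + 1) * centralBinom m ^ 2 ≤ 16 ^ m := by
  induction m with
  | zero => simp
  | succ m ih =>
    have key : (m + 1) ^ 2 * ((2 * (m + 1) + 1) * centralBinom (m + 1) ^ 2)
        ≤ (m + 1) ^ 2 * 16 ^ (m + 1) :=
      calc (m + 1) ^ 2 * ((2 * (m + 1) + 1) * centralBinom (m + 1) ^ 2)
          = (2 * m + 3) * ((m + 1) * centralBinom (m + 1)) ^ 2 := by ring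
        _ = 4 * ((2 * m + 3) * (2 * m + 1)) * ((2 * m + 1) * centralBinom m ^ 2) := by
            rw [succ_mul_centralBinom_succ]; ring
        _ ≤ 4 * (4 * (m + 1) ^ 2) * 16 ^ m := by gcongr 4 * ?_ * ?_; nlinarith
        _ = (m + 1) ^ 2 * 16 ^ (m + 1) := by ring
    exact le_of_mul_le_mul_left key (by positivity)

lemma mul_choose_half_sq_le_four_pow (k : ℕ) : k * k.choose (k / 2) ^ 2 ≤ 4 ^ k := by
  obtain ⟨m, rfl | rfl⟩ := even_or_odd' k
  · calc 2 * m * (2 * m).choose (2 * m / 2) ^ 2 ≤ (2 * m + 1) * centralBinom m ^ 2 := by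
          rw [mul_div_cancel_left₀ m two_ne_zero, centralBinom_eq_two_mul_choose]; gcongr; omega
      _ ≤ 4 ^ (2 * m) := by rw [pow_mul]; exact two_mul_add_one_mul_centralBinom_sq_le m
  · have hhalf : centralBinom (m + 1) = 2 * (2 * m + 1).choose m := by
      rw [centralBinom_eq_two_mul_choose, show 2 * (m + 1) = 2 * m + 1 + 1 by ring,
        choose_succ_succ', choose_symm_half]; ring
    have h := two_mul_add_one_mul_centralBinom_sq_le (m + 1)
    rw [hhalf, show 16 ^ (m + 1) = 4 * 4 ^ (2 * m + 1) by
      rw [pow_succ, pow_succ, pow_mul]; ring] at h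
    rw [show (2 * m + 1) / 2 = m by omega]
    nlinarith

end Nat

lemma sqrt_mul_choose_half_le_two_pow (k : ℕ) :
    √(k : ℝ) * k.choose (k / 2) ≤ 2 ^ k := by
  rw [← Real.sqrt_sq (by positivity : (0 : ℝ) ≤ 2 ^ k),
    ← Real.sqrt_sq (by positivity : (0 : ℝ) ≤ k.choose (k / 2)), ← Real.sqrt_mul (by positivity)]
  gcongr
  rw [← pow_mul, mul_comm k, pow_mul]
  exact_mod_cast Nat.mul_choose_half_sq_le_four_pow k

lemma isAntichain_filter_sum_eq {ι : Type*} [Fintype ι] {w : ι → ℝ} (hw : ∀ i, 0 < w i)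
    (c : ℝ) :
    IsAntichain (· ⊆ ·) (({A | ∑ i ∈ A, w i = c} : Finset (Finset ι)) : Set (Finset ι)) := by
  intro A hA B hB hne hAB
  simp only [coe_filter, mem_univ, true_and] at hA hB
  obtain ⟨i, hiB, hiA⟩ := exists_of_ssubset (hAB.lt_of_ne hne)
  exact (sum_lt_sum_of_subset hAB hiB hiA (hw i) fun j _ _ => (hw j).le).ne (hA.trans hB.symm)

theorem littlewood_offord {ι : Type*} [Fintype ι] (v : ι → ℝ) (hv : ∀ i, v i ≠ 0) (t : ℝ) :
    #{A : Finset ι | ∑ i ∈ A, v i = t} ≤ (Fintype.card ι).choose (Fintype.card ι / 2) := by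
  set N : Finset ι := {i | v i < 0}
  -- flipping the coordinates of `N` turns the weights `v` into the positive weights `|v|`
  have hflip (A : Finset ι) : ∑ i ∈ A ∆ N, |v i| = ∑ i ∈ A, v i - ∑ i ∈ N, v i := by
    rw [← Fintype.sum_ite_mem (A ∆ N), ← Fintype.sum_ite_mem A, ← Fintype.sum_ite_mem N,
      ← sum_sub_distrib]
    refine sum_congr rfl fun i _ => ?_
    have hN : i ∈ N ↔ v i < 0 := by simp [N]
    by_cases hA : i ∈ A <;> by_cases hi : v i < 0 <;>
      simp [mem_symmDiff, hN, hA, hi, abs_of_neg, abs_of_nonneg, not_lt.1]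
  calc #{A : Finset ι | ∑ i ∈ A, v i = t}
      ≤ #{B : Finset ι | ∑ i ∈ B, |v i| = t - ∑ i ∈ N, v i} :=
        card_le_card_of_injOn (· ∆ N) (fun A hA => by
          simp only [mem_coe, mem_filter, mem_univ, true_and] at hA ⊢; rw [hflip, hA])
          (symmDiff_left_injective N).injOn
    _ ≤ _ := (isAntichain_filter_sum_eq (fun i => abs_pos.2 (hv i)) _).sperner

lemma card_filter_sum_ite_eq_le_choose {ι : Type*} [Fintype ι] [DecidableEq ι] (v : ι → ℝ)
    (hv : ∀ i, v i ≠ 0) (t : ℝ) : #{η : ι → Bool | ∑ i, (if η i then v i else 0) = t}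
      ≤ (Fintype.card ι).choose (Fintype.card ι / 2) := by
  refine le_trans ?_ (littlewood_offord v hv t)
  refine card_le_card_of_injOn (fun η => univ.filter fun i => η i) (fun η hη => ?_) ?_
  · simpa [sum_filter] using hη
  · intro η _ η' _ h
    funext i
    simpa using congrArg (i ∈ ·) h

lemma cprob_sum_ite_eq_le_choose_div {ι : Type*} [Fintype ι] [DecidableEq ι] (S : Finset ι)
    (v : ι → ℝ) (hv : ∀ j ∈ S, v j ≠ 0) (t : ℝ) :
    cprob (univ : Finset (ι → Bool)) (fun ξ => ∑ j ∈ S, (if ξ j then v j else 0) = t)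
      ≤ (#S).choose (#S / 2) / 2 ^ #S := by
  -- the event only sees the coordinates in `S`
  have hsplit : #{ξ : ι → Bool | ∑ j ∈ S, (if ξ j then v j else 0) = t}
      = #{η : S → Bool | ∑ j, (if η j then v j else 0) = t} * 2 ^ (Fintype.card ι - #S) := by
    let e : (ι → Bool) ≃ (S → Bool) × ({j // j ∉ S} → Bool) :=
      Equiv.piEquivPiSubtypeProd (· ∈ S) _
    rw [card_equiv e
      (t := ({η : S → Bool | ∑ j, (if η j then v j else 0) = t} : Finset _) ×ˢ univ) fun ξ => ?_,
      card_product]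
    · simp
    · simp only [e, mem_product, mem_univ, and_true, Equiv.piEquivPiSubtypeProd_apply, mem_filter,
        true_and]
      rw [sum_coe_sort S fun j => if ξ j then v j else 0]
  have hS := card_filter_sum_ite_eq_le_choose (fun j : S => v j) (fun j => hv j j.2) t
  rw [Fintype.card_coe] at hS
  rw [cprob, hsplit, card_univ, Fintype.card_fun, Fintype.card_bool,
    div_le_div_iff₀ (by positivity) (by positivity)]
  push_cast
  calc _ = (#{η : S → Bool | ∑ j, (if η j then v j else 0) = t} : ℝ) * 2 ^ Fintype.card ι := by
        rw [mul_assoc, ← pow_add, Nat.sub_add_cancel (card_le_univ S)]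
    _ ≤ _ := by gcongr

lemma shuffleAt_apply_left {n : ℕ} (M : Matrix (Fin n) (Fin n) Bool) (i₁ i₂ : Fin n)
    (T : Finset (Fin n)) (σ : Equiv.Perm (Fin n)) (ξ : Fin n → Bool) (j : Fin n) :
    shuffleAt M i₁ i₂ T σ ξ i₁ j =
      if j ∈ T then ξ j else if σ⁻¹ j ∈ T then !(ξ (σ⁻¹ j)) else M i₁ j := by
  simp [shuffleAt]

lemma disjoint_exSet_swap {n : ℕ} (M : Matrix (Fin n) (Fin n) Bool) (i₁ i₂ : Fin n) :
    Disjoint (exSet M i₁ i₂) (exSet M i₂ i₁) := by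
  simp only [exSet, disjoint_filter]
  grind

lemma exists_sum_shuffleAt_eq {n : ℕ} (M : Matrix (Fin n) (Fin n) Bool) (i₁ i₂ : Fin n)
    (T : Finset (Fin n)) (σ : Equiv.Perm (Fin n)) (hT : Disjoint T (T.image σ))
    (u : Fin n → ℝ) :
    ∃ D : ℝ, ∀ ξ : Fin n → Bool,
      ∑ j, (if shuffleAt M i₁ i₂ T σ ξ i₁ j then u j else 0) =
        ∑ j ∈ T.filter (fun j => u j ≠ u (σ j)), (if ξ j then u j - u (σ j) else 0) + D := by
  refine ⟨∑ j ∈ T, u (σ j) + ∑ j ∈ (T ∪ T.image σ)ᶜ, (if M i₁ j then u j else 0), fun ξ => ?_⟩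
  rw [← sum_add_sum_compl (T ∪ T.image σ), sum_union hT, sum_image σ.injective.injOn]
  -- on the minor at columns `(j, σ j)`, row `i₁` carries `u j` or `u (σ j)` according to `ξ j`
  have hminors : ∑ j ∈ T, (if shuffleAt M i₁ i₂ T σ ξ i₁ j then u j else 0) +
      ∑ j ∈ T, (if shuffleAt M i₁ i₂ T σ ξ i₁ (σ j) then u (σ j) else 0) =
      ∑ j ∈ T.filter (fun j => u j ≠ u (σ j)), (if ξ j then u j - u (σ j) else 0) +
        ∑ j ∈ T, u (σ j) := by
    rw [sum_filter_of_ne fun j _ h => by contrapose! h; simp [h], ← sum_add_distrib,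
      ← sum_add_distrib]
    refine sum_congr rfl fun j hj => ?_
    have hσj : σ j ∉ T := disjoint_right.1 hT (mem_image_of_mem σ hj)
    cases h : ξ j <;> simp [shuffleAt_apply_left, hj, hσj, h]
  have hrest : ∑ j ∈ (T ∪ T.image σ)ᶜ, (if shuffleAt M i₁ i₂ T σ ξ i₁ j then u j else 0) =
      ∑ j ∈ (T ∪ T.image σ)ᶜ, (if M i₁ j then u j else 0) := by
    refine sum_congr rfl fun j hj => ?_
    simp only [mem_compl, mem_union, mem_image, not_or, not_exists, not_and] at hj
    have hσj : σ⁻¹ j ∉ T := fun h => hj.2 _ h (σ.apply_symm_apply j)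
    rw [shuffleAt_apply_left, if_neg hj.1, if_neg hσj]
  rw [hminors, hrest]
  ring

/-- **The role of the signs ξ.**  For any `M ∈ M_{n,d}`, distinct rows `i₁ ≠ i₂`, any
bijection `π : Ex_M(i₁,i₂) → Ex_M(i₂,i₁)` (encoded by a permutation `σ` mapping
`Ex_M(i₁,i₂)` onto `Ex_M(i₂,i₁)`), and any vector `u` (deterministic, or random
depending only on the other rows — equivalently, arbitrary once `M` is fixed), the
probability over the iid uniform signs `ξ` that the `i₁`-th row `R̃_{i₁}` of the
shuffled matrix `M̃` satisfies `R̃_{i₁} · u = 0` is `O(|Steps(u)|^{-1/2})`, where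
`Steps(u) = {j ∈ Ex_M(i₁,i₂) : u(j) ≠ u(π(j))}`. -/
theorem rwalk_anticoncentration :
    ∃ C : ℝ, 0 < C ∧ ∀ (n d : ℕ), 1 ≤ d → d ≤ n →
      ∀ M ∈ regSet n d, ∀ i₁ i₂ : Fin n, i₁ ≠ i₂ →
      ∀ σ : Equiv.Perm (Fin n), (exSet M i₁ i₂).image σ = exSet M i₂ i₁ →
      ∀ u : Fin n → ℝ,
        Real.sqrt (((exSet M i₁ i₂).filter fun j => u j ≠ u (σ j)).card) *
          cprob (Finset.univ : Finset (Fin n → Bool)) (fun ξ =>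
            ∑ j, (if shuffleAt M i₁ i₂ (exSet M i₁ i₂) σ ξ i₁ j then u j else 0) = 0)
        ≤ C := by
  refine ⟨1, one_pos, fun n d _ _ M _ i₁ i₂ _ σ hσ u => ?_⟩
  set Steps := (exSet M i₁ i₂).filter fun j => u j ≠ u (σ j)
  obtain ⟨D, hD⟩ := exists_sum_shuffleAt_eq M i₁ i₂ (exSet M i₁ i₂) σ
    (hσ ▸ disjoint_exSet_swap M i₁ i₂) u
  simp only [hD, ← eq_neg_iff_add_eq_zero]
  calc √(#Steps : ℝ) * cprob univ
        (fun ξ : Fin n → Bool => ∑ j ∈ Steps, (if ξ j then u j - u (σ j) else 0) = -D)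
      ≤ √(#Steps : ℝ) * ((#Steps).choose (#Steps / 2) / 2 ^ #Steps) := by
        refine mul_le_mul_of_nonneg_left ?_ (Real.sqrt_nonneg _)
        exact cprob_sum_ite_eq_le_choose_div Steps (fun j => u j - u (σ j))
          (fun j hj => sub_ne_zero.2 (mem_filter.1 hj).2) _
    _ ≤ 1 := by
        rw [← mul_div_assoc, div_le_one (by positivity)]
        exact sqrt_mul_choose_half_le_two_pow _

end
end

section
/- Let Σ be an n×n 0/1 matrix, d ∈ {1,…,n}, p = d/n, and suppose Σ satisfies the 'no large sparse minors' property: there are constants C₂, c₂ > 0 such that e_Σ(A,B) ≥ c₂ p |A||B| for all A, B ⊆ [n] with |A|, |B| ≥ C₂ p^{−1} log n. Let A, B ⊆ [n], write B(i) = B ∩ N_Σ(i), and set A' = {i ∈ A : |B(i)| ≥ c₂ p|B|}. Then there is γ > 0 sufficiently small depending only on C₂ such that if |B| ≥ (log n)/(2γp), then |A \ A'| = O_{C₂}(p^{−1} log n). -/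
open scoped Classical

noncomputable section

/-- `N_Σ(i)`: the support of the `i`-th row. -/
def nbhd {n : ℕ} (A : Matrix (Fin n) (Fin n) Bool) (i : Fin n) : Finset (Fin n) :=
  Finset.univ.filter fun j => A i j = true

/-- `e_Σ(X,Y)`, the number of edges from `X` to `Y`. -/
def ecount {n : ℕ} (A : Matrix (Fin n) (Fin n) Bool) (X Y : Finset (Fin n)) : ℕ :=
  ∑ i ∈ X, ∑ j ∈ Y, (if A i j then 1 else 0)

/-- **Most rows see a large set.**  Suppose the 0/1 matrix `Σ` has no large sparse
minors: `e_Σ(X,Y) ≥ c₂ p |X||Y|` whenever `|X|, |Y| ≥ C₂ p⁻¹ log n`, where `p = d/n`.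
Let `A' = {i ∈ A : |B ∩ N_Σ(i)| ≥ c₂ p |B|}`.  Then there is a `γ > 0` small enough
depending only on `C₂` such that if `|B| ≥ (log n)/(2γp)`, then
`|A \ A'| = O_{C₂}(p⁻¹ log n)`. -/
theorem most_rows_see_large_sets (C₂ : ℝ) (hC₂ : 0 < C₂) :
    ∃ γ K : ℝ, 0 < γ ∧ 0 < K ∧
      ∀ c₂ : ℝ, 0 < c₂ →
      ∀ (n d : ℕ), 1 ≤ d → d ≤ n →
      ∀ Sg : Matrix (Fin n) (Fin n) Bool,
      (∀ X Y : Finset (Fin n),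
          C₂ * ((n : ℝ) / d) * Real.log n ≤ (X.card : ℝ) →
          C₂ * ((n : ℝ) / d) * Real.log n ≤ (Y.card : ℝ) →
          c₂ * ((d : ℝ) / n) * X.card * Y.card ≤ (ecount Sg X Y : ℝ)) →
      ∀ A B : Finset (Fin n),
      Real.log n / (2 * γ * ((d : ℝ) / n)) ≤ (B.card : ℝ) →
        (((A.filter fun i =>
            ¬ c₂ * ((d : ℝ) / n) * B.card ≤ ((B ∩ nbhd Sg i).card : ℝ)).card : ℝ)
          ≤ K * ((n : ℝ) / d) * Real.log n) := by
  refine ⟨1 / (2 * C₂), C₂, by positivity, hC₂, ?_⟩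
  intro c₂ hc₂ n d hd hdn Sg hmin A B hB
  have hd0 : (0 : ℝ) < d := by exact_mod_cast hd
  have hn0 : (0 : ℝ) < n := lt_of_lt_of_le hd0 (by exact_mod_cast hdn)
  have hn1 : (1 : ℕ) ≤ n := le_trans hd hdn
  have hlog : 0 ≤ Real.log n := Real.log_nonneg (by exact_mod_cast hn1)
  set X : Finset (Fin n) := A.filter fun i =>
      ¬ c₂ * ((d : ℝ) / n) * B.card ≤ ((B ∩ nbhd Sg i).card : ℝ) with hX
  by_contra hcon
  push_neg at hcon
  have hXcard : C₂ * ((n : ℝ) / d) * Real.log n ≤ (X.card : ℝ) := le_of_lt hcon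
  have hBcard : C₂ * ((n : ℝ) / d) * Real.log n ≤ (B.card : ℝ) := by
    have : Real.log n / (2 * (1 / (2 * C₂)) * ((d : ℝ) / n))
        = C₂ * ((n : ℝ) / d) * Real.log n := by
      field_simp
    linarith [hB, this ▸ hB]
  have hmain := hmin X B hXcard hBcard
  have hXne : X.Nonempty := by
    rw [← Finset.card_pos]
    by_contra h
    push_neg at h
    interval_cases hc : X.card
    · simp [hc] at hcon
      have h0 : 0 ≤ C₂ * ((n : ℝ) / d) * Real.log n := by positivity
      linarith
  -- rewrite ecount as a sum of intersection cards
  have hec : (ecount Sg X B : ℝ) = ∑ i ∈ X, ((B ∩ nbhd Sg i).card : ℝ) := by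
    unfold ecount
    push_cast
    refine Finset.sum_congr rfl fun i _ => ?_
    have : B ∩ nbhd Sg i = B.filter fun j => Sg i j = true := by
      ext j; simp [nbhd, Finset.mem_inter, Finset.mem_filter, and_comm]
    rw [this, Finset.card_filter]
    push_cast
    rfl
  have hlt : ∑ i ∈ X, ((B ∩ nbhd Sg i).card : ℝ)
      < ∑ _i ∈ X, c₂ * ((d : ℝ) / n) * B.card := by
    refine Finset.sum_lt_sum_of_nonempty hXne fun i hi => ?_
    have := (Finset.mem_filter.mp hi).2
    linarith [lt_of_not_ge this]
  rw [Finset.sum_const, nsmul_eq_mul] at hlt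
  rw [hec] at hmain
  nlinarith [hmain, hlt]

end
end
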